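/- arXiv:2003.13829 — 5 statements merged into one kernel-verified Lean document; each statement's English description precedes it below -/
import Mathlib

section
/- For every rotation k ∈ SO(2), the lattice k·[[1, 1/2],[0, √3/2]]·ℤ² is admissible for the open unit disc D and has covolume √3/2; hence every rotation of the hexagonal lattice is D-critical. -/
/-!
The hexagonal lattice has squared-norm form `p² + pq + q²`, which is at least `1` at every nonzero
integer point, and rotations preserve norms; so its rotations are disc-admissible of covolume
`√3/2`. Conversely every disc-admissible lattice has covolume at least `√3/2` (Lagrange): for a
shortest primitive vector `u` and a second basis vector `w` reduced against it,
`det² = ‖u‖²‖w‖² - ⟪u, w⟫² ≥ ‖u‖⁴ - ‖u‖⁴/4 ≥ 3/4`.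
-/

open MeasureTheory

noncomputable section

/-- The lattice `g ℤ²` in `ℝ²`. -/
def lattice2 (g : Matrix (Fin 2) (Fin 2) ℝ) : Set (Fin 2 → ℝ) :=
  {x | ∃ m : Fin 2 → ℤ, x = g.mulVec (fun i => (m i : ℝ))}

/-- `K`-admissibility: the lattice meets `K` only at the origin. -/
def Admissible2 (K : Set (Fin 2 → ℝ)) (g : Matrix (Fin 2) (Fin 2) ℝ) : Prop :=
  lattice2 g ∩ K = {0}

/-- The critical determinant `Δ(K)`. -/
def critDet2 (K : Set (Fin 2 → ℝ)) : ℝ :=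
  sInf {d | ∃ g : Matrix (Fin 2) (Fin 2) ℝ, g.det ≠ 0 ∧ Admissible2 K g ∧ d = |g.det|}

/-- The critical locus `𝓛(K)`: the set of `K`-admissible lattices of covolume `Δ(K)`. -/
def critLocus2 (K : Set (Fin 2 → ℝ)) : Set (Set (Fin 2 → ℝ)) :=
  {L | ∃ g : Matrix (Fin 2) (Fin 2) ℝ, g.det ≠ 0 ∧ L = lattice2 g ∧ Admissible2 K g ∧
    |g.det| = critDet2 K}

/-- The open unit disc in `ℝ²`. -/
def unitDisc : Set (Fin 2 → ℝ) := {x | x 0 ^ 2 + x 1 ^ 2 < 1}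

/-- The open unit square `(-1,1)²`. -/
def openSquare : Set (Fin 2 → ℝ) := {x | |x 0| < 1 ∧ |x 1| < 1}

/-- A matrix generating the hexagonal lattice `ℤ·(1,0) + ℤ·(1/2,√3/2)`. -/
def hexMat : Matrix (Fin 2) (Fin 2) ℝ := !![1, 1/2; 0, Real.sqrt 3 / 2]

open Matrix Filter

def normSq2 (x : Fin 2 → ℝ) : ℝ := x 0 ^ 2 + x 1 ^ 2

def cross2 (x y : Fin 2 → ℝ) : ℝ := x 0 * y 1 - x 1 * y 0

theorem normSq2_nonneg (x : Fin 2 → ℝ) : 0 ≤ normSq2 x := by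
  unfold normSq2; positivity

theorem cross2_sq_add_inner_sq (x y : Fin 2 → ℝ) :
    cross2 x y ^ 2 + (x 0 * y 0 + x 1 * y 1) ^ 2 = normSq2 x * normSq2 y := by
  unfold cross2 normSq2; ring

theorem cross2_mulVec (g : Matrix (Fin 2) (Fin 2) ℝ) (x y : Fin 2 → ℝ) :
    cross2 (g *ᵥ x) (g *ᵥ y) = g.det * cross2 x y := by
  simp only [cross2, mulVec_fin_two, det_fin_two, cons_val_zero, cons_val_one]
  ring

theorem normSq2_mulVec_of_transpose_mul_self {k : Matrix (Fin 2) (Fin 2) ℝ}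
    (hk : kᵀ * k = 1) (x : Fin 2 → ℝ) : normSq2 (k *ᵥ x) = normSq2 x := by
  have h00 := congrFun (congrFun hk 0) 0
  have h01 := congrFun (congrFun hk 0) 1
  have h11 := congrFun (congrFun hk 1) 1
  simp only [mul_apply, Fin.sum_univ_two, transpose_apply, one_apply_eq,
    one_apply_ne zero_ne_one] at h00 h01 h11
  simp only [normSq2, mulVec_fin_two, cons_val_zero, cons_val_one]
  linear_combination x 0 ^ 2 * h00 + 2 * x 0 * x 1 * h01 + x 1 ^ 2 * h11

/- Lagrange reduction: replacing `w` by `w - n u` with `n` the integer nearest to `⟪u, w⟫ / ‖u‖²`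
keeps the cross product and makes `|⟪u, w - n u⟫| ≤ ‖u‖² / 2`. -/
theorem three_div_four_mul_normSq2_sq_le_cross2_sq {u w : Fin 2 → ℝ}
    (hshort : ∀ n : ℤ, normSq2 u ≤ normSq2 (w - (n : ℝ) • u)) :
    3 / 4 * normSq2 u ^ 2 ≤ cross2 u w ^ 2 := by
  rcases (normSq2_nonneg u).eq_or_lt with hu | hu
  · rw [← hu]; norm_num; positivity
  set n := round ((u 0 * w 0 + u 1 * w 1) / normSq2 u)
  set v := w - (n : ℝ) • u
  have hcross : cross2 u v = cross2 u w := by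
    simp only [v, cross2, Pi.sub_apply, Pi.smul_apply, smul_eq_mul]; ring
  have hinner : |u 0 * v 0 + u 1 * v 1| ≤ normSq2 u / 2 := by
    have hround := abs_sub_round ((u 0 * w 0 + u 1 * w 1) / normSq2 u)
    have hv : u 0 * v 0 + u 1 * v 1 =
        ((u 0 * w 0 + u 1 * w 1) / normSq2 u - n) * normSq2 u := by
      simp only [v, normSq2, Pi.sub_apply, Pi.smul_apply, smul_eq_mul] at hu ⊢
      field_simp; ring
    rw [hv, abs_mul, abs_of_pos hu]
    nlinarith
  have hinner_sq := sq_le_sq' (abs_le.1 hinner).1 (abs_le.1 hinner).2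
  have hlagrange := cross2_sq_add_inner_sq u v
  rw [hcross] at hlagrange
  nlinarith [mul_le_mul_of_nonneg_left (hshort n) hu.le]

theorem admissible2_unitDisc_iff {g : Matrix (Fin 2) (Fin 2) ℝ} :
    Admissible2 unitDisc g ↔ ∀ x ∈ lattice2 g, x ≠ 0 → 1 ≤ normSq2 x := by
  have hzero : (0 : Fin 2 → ℝ) ∈ lattice2 g ∩ unitDisc :=
    ⟨⟨0, by ext i; fin_cases i <;> simp⟩, show (0 : ℝ) ^ 2 + 0 ^ 2 < 1 by norm_num⟩
  simp only [Admissible2, Set.eq_singleton_iff_unique_mem, hzero, true_and]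
  refine forall_congr' fun x => ⟨fun h hx hx0 => ?_, fun h hx => ?_⟩
  · exact not_lt.1 fun hlt => hx0 (h ⟨hx, hlt⟩)
  · by_contra hx0
    exact (h hx.1 hx0).not_gt hx.2

theorem tendsto_normSq2_mulVec_cofinite {g : Matrix (Fin 2) (Fin 2) ℝ} (hg : g.det ≠ 0) :
    Tendsto (fun m : Fin 2 → ℤ => normSq2 (g *ᵥ fun i => (m i : ℝ))) cofinite atTop := by
  rw [tendsto_atTop]
  intro R
  rw [eventually_cofinite]
  set h := g⁻¹
  set K := (h 0 0 ^ 2 + h 0 1 ^ 2 + h 1 0 ^ 2 + h 1 1 ^ 2) * |R|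
  set B : ℤ := ⌈K⌉ + 1
  refine (Set.finite_Icc (fun _ => -B) fun _ => B).subset fun m hm => ?_
  set x := g *ᵥ fun i => (m i : ℝ)
  have hx : normSq2 x ≤ |R| := (not_le.1 hm).le.trans (le_abs_self R)
  have hcoord : ∀ i, (m i : ℝ) = h i 0 * x 0 + h i 1 * x 1 := by
    intro i
    have hinv : h *ᵥ x = fun i => (m i : ℝ) := by
      rw [mulVec_mulVec, nonsing_inv_mul g (isUnit_iff_ne_zero.2 hg), one_mulVec]
    rw [show (m i : ℝ) = (h *ᵥ x) i by rw [hinv], mulVec_fin_two]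
    fin_cases i <;> rfl
  have hbound : ∀ i, |m i| ≤ B := by
    intro i
    have hsq : (m i : ℝ) ^ 2 ≤ K := by
      have hsum : h i 0 ^ 2 + h i 1 ^ 2 ≤ h 0 0 ^ 2 + h 0 1 ^ 2 + h 1 0 ^ 2 + h 1 1 ^ 2 := by
        fin_cases i <;> dsimp <;> nlinarith [sq_nonneg (h 0 0), sq_nonneg (h 0 1),
          sq_nonneg (h 1 0), sq_nonneg (h 1 1)]
      calc (m i : ℝ) ^ 2 ≤ (h i 0 ^ 2 + h i 1 ^ 2) * normSq2 x := by
            rw [hcoord, normSq2]; nlinarith [sq_nonneg (h i 0 * x 1 - h i 1 * x 0)]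
        _ ≤ K := mul_le_mul hsum hx (normSq2_nonneg x) (by positivity)
    have habs : (|m i| : ℝ) ≤ ⌈K⌉ + 1 := by
      nlinarith [Int.le_ceil K, abs_nonneg (m i : ℝ), sq_abs (m i : ℝ)]
    exact_mod_cast habs
  exact ⟨fun i => (abs_le.1 (hbound i)).1, fun i => (abs_le.1 (hbound i)).2⟩

/- Since `m, m'` is unimodular, every `m' - n • m` is again primitive, so the minimality of `u`
among primitive lattice vectors is exactly the hypothesis of the reduction bound. -/
theorem sqrt_three_div_two_le_abs_det_of_admissible2 {g : Matrix (Fin 2) (Fin 2) ℝ}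
    (hg : g.det ≠ 0) (hadm : Admissible2 unitDisc g) : √3 / 2 ≤ |g.det| := by
  obtain ⟨m, ⟨a, b, hab⟩, hmin⟩ :=
    (tendsto_normSq2_mulVec_cofinite hg).exists_within_forall_le
      (s := {m | IsCoprime (m 0) (m 1)}) ⟨![1, 0], by simpa using isCoprime_one_left⟩
  set m' : Fin 2 → ℤ := ![-b, a]
  set u := g *ᵥ fun i => (m i : ℝ)
  set w := g *ᵥ fun i => (m' i : ℝ)
  have huw : cross2 u w = g.det := by
    have hab' : (a : ℝ) * m 0 + b * m 1 = 1 := by exact_mod_cast hab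
    rw [cross2_mulVec, cross2]
    simp only [m', cons_val_zero, cons_val_one, Int.cast_neg]
    linear_combination g.det * hab'
  have hu : 1 ≤ normSq2 u :=
    admissible2_unitDisc_iff.1 hadm u ⟨m, rfl⟩ fun hu0 => hg (by simp [← huw, hu0, cross2])
  have hshort : ∀ n : ℤ, normSq2 u ≤ normSq2 (w - (n : ℝ) • u) := by
    intro n
    have hw : w - (n : ℝ) • u = g *ᵥ fun i => ((m' - n • m) i : ℝ) := by
      simp only [u, w, ← mulVec_smul, ← mulVec_sub]
      congr 1; ext i; simp
    rw [hw]
    refine hmin _ ⟨-m 1, m 0, ?_⟩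
    simp only [m', Pi.sub_apply, Pi.smul_apply, smul_eq_mul, cons_val_zero, cons_val_one]
    linear_combination hab
  have h34 : 3 / 4 ≤ g.det ^ 2 := by
    have := three_div_four_mul_normSq2_sq_le_cross2_sq hshort
    rw [huw] at this
    nlinarith
  rw [← Real.sqrt_sq_eq_abs]
  exact Real.le_sqrt_of_sq_le (by rw [div_pow, Real.sq_sqrt zero_le_three]; linarith)

theorem one_le_sq_add_mul_add_sq {m : Fin 2 → ℤ} (hm : m ≠ 0) :
    1 ≤ m 0 ^ 2 + m 0 * m 1 + m 1 ^ 2 := by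
  have hpos : 0 < m 0 ^ 2 + m 0 * m 1 + m 1 ^ 2 := by
    by_contra! hle
    have h1 : m 1 = 0 := by nlinarith [sq_nonneg (2 * m 0 + m 1), sq_nonneg (m 1)]
    have h0 : m 0 = 0 := by nlinarith
    exact hm (by ext i; fin_cases i <;> assumption)
  omega

theorem det_hexMat : hexMat.det = √3 / 2 := by
  rw [hexMat, det_fin_two_of]
  ring

theorem normSq2_hexMat_mulVec (m : Fin 2 → ℤ) :
    normSq2 (hexMat *ᵥ fun i => (m i : ℝ)) = ((m 0 ^ 2 + m 0 * m 1 + m 1 ^ 2 : ℤ) : ℝ) := by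
  simp only [normSq2, hexMat, mulVec_fin_two, of_apply, cons_val', cons_val_zero, cons_val_one,
    empty_val', cons_val_fin_one]
  push_cast
  linear_combination (m 1 : ℝ) ^ 2 / 4 * Real.sq_sqrt (zero_le_three : (0 : ℝ) ≤ 3)

theorem admissible2_unitDisc_mul_hexMat {k : Matrix (Fin 2) (Fin 2) ℝ} (hk : kᵀ * k = 1) :
    Admissible2 unitDisc (k * hexMat) := by
  refine admissible2_unitDisc_iff.2 ?_
  rintro x ⟨m, rfl⟩ hx
  have hm : m ≠ 0 := by
    rintro rfl
    exact hx (by ext i; fin_cases i <;> simp)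
  rw [← mulVec_mulVec, normSq2_mulVec_of_transpose_mul_self hk, normSq2_hexMat_mulVec]
  exact_mod_cast one_le_sq_add_mul_add_sq hm

theorem critDet2_unitDisc : critDet2 unitDisc = √3 / 2 := by
  refine IsLeast.csInf_eq ⟨⟨hexMat, ?_, ?_, ?_⟩, ?_⟩
  · rw [det_hexMat]; positivity
  · simpa using admissible2_unitDisc_mul_hexMat (k := 1) (by simp)
  · rw [det_hexMat, abs_of_pos (by positivity)]
  · rintro _ ⟨g, hg, hadm, rfl⟩
    exact sqrt_three_div_two_le_abs_det_of_admissible2 hg hadm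

/-- Every rotation of the hexagonal lattice is admissible for the unit disc, has covolume
`√3/2`, and is hence `D`-critical. -/
theorem rotated_hexagonal_lattice_critical (k : Matrix (Fin 2) (Fin 2) ℝ)
    (hk : k.transpose * k = 1) (hdet : k.det = 1) :
    Admissible2 unitDisc (k * hexMat) ∧ |(k * hexMat).det| = Real.sqrt 3 / 2 ∧
      lattice2 (k * hexMat) ∈ critLocus2 unitDisc := by
  have hdet' : (k * hexMat).det = √3 / 2 := by rw [det_mul, hdet, det_hexMat, one_mul]
  have hadm := admissible2_unitDisc_mul_hexMat hk
  have habs : |(k * hexMat).det| = √3 / 2 := by rw [hdet', abs_of_pos (by positivity)]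
  exact ⟨hadm, habs, k * hexMat, by rw [hdet']; positivity, rfl, hadm,
    by rw [habs, critDet2_unitDisc]⟩

end
end

section
/- For the open square S = (-1,1)² ⊂ ℝ², a lattice of covolume 1 is S-admissible if and only if it is of the form [[1,t],[0,1]]·ℤ² or [[1,0],[t,1]]·ℤ² for some t ∈ ℝ. In particular Δ(S) = 1 and the critical locus of S is the union of these two families of sheared integer lattices. -/
open MeasureTheory

noncomputable section

/-!
Minkowski's theorem for the open square (area 4) gives `Δ(S) ≥ 1`, and for the closed square it
gives every lattice of covolume 1 a primitive point `p` with `|p₀|, |p₁| ≤ 1`; if the lattice is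
admissible, `p` lies on the boundary. A change of basis of `ℤ²` and the symmetries of the square
bring the lattice to the form `(1, β) ℤ + (γ, 1 + βγ) ℤ` with `|β| ≤ 1`. Reducing `γ` modulo `ℤ`
to some `s` with `βs ≤ 0` yields the lattice point `(s, 1 + βs)`, which lies in the open square
unless `β = 0` (a horizontal shear) or `s = 0` (a vertical shear).
-/

def closedSquare : Set (Fin 2 → ℝ) := {x | |x 0| ≤ 1 ∧ |x 1| ≤ 1}

def IsShearedIntegerLattice (L : Set (Fin 2 → ℝ)) : Prop :=
  ∃ t : ℝ, L = lattice2 !![1, t; 0, 1] ∨ L = lattice2 !![1, 0; t, 1]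

open scoped Matrix

variable {g : Matrix (Fin 2) (Fin 2) ℝ}

lemma openSquare_eq_pi : openSquare = Set.univ.pi fun _ => Set.Ioo (-1) 1 := by
  ext x
  simp only [openSquare, Set.mem_ofPred_eq, Set.mem_univ_pi, Set.mem_Ioo, Fin.forall_fin_two,
    abs_lt]

lemma closedSquare_eq_pi : closedSquare = Set.univ.pi fun _ => Set.Icc (-1) 1 := by
  ext x
  simp only [closedSquare, Set.mem_ofPred_eq, Set.mem_univ_pi, Set.mem_Icc, Fin.forall_fin_two,
    abs_le]

lemma zero_mem_openSquare : (0 : Fin 2 → ℝ) ∈ openSquare := by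
  simp [openSquare]

lemma neg_mem_openSquare {x : Fin 2 → ℝ} (hx : x ∈ openSquare) : -x ∈ openSquare := by
  simpa [openSquare] using hx

lemma neg_mem_closedSquare {x : Fin 2 → ℝ} (hx : x ∈ closedSquare) : -x ∈ closedSquare := by
  simpa [closedSquare] using hx

lemma convex_openSquare : Convex ℝ openSquare :=
  openSquare_eq_pi ▸ convex_pi fun _ _ => convex_Ioo _ _

lemma convex_closedSquare : Convex ℝ closedSquare :=
  closedSquare_eq_pi ▸ convex_pi fun _ _ => convex_Icc _ _

lemma isCompact_closedSquare : IsCompact closedSquare :=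
  closedSquare_eq_pi ▸ isCompact_univ_pi fun _ => isCompact_Icc

lemma volume_openSquare : volume openSquare = 4 := by
  rw [openSquare_eq_pi, volume_pi_pi]
  norm_num [Real.volume_Ioo]

lemma volume_closedSquare : volume closedSquare = 4 := by
  rw [closedSquare_eq_pi, volume_pi_pi]
  norm_num [Real.volume_Icc]

lemma mulVec_vec2_mem_lattice2 (g : Matrix (Fin 2) (Fin 2) ℝ) (a b : ℤ) :
    g *ᵥ ![(a : ℝ), b] ∈ lattice2 g :=
  ⟨![a, b], by congr 1; ext i; fin_cases i <;> simp⟩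

lemma admissible2_iff {K : Set (Fin 2 → ℝ)} (hK : 0 ∈ K) :
    Admissible2 K g ↔ ∀ x ∈ lattice2 g, x ∈ K → x = 0 := by
  have h0 : (0 : Fin 2 → ℝ) ∈ lattice2 g := ⟨0, by ext i; fin_cases i <;> simp⟩
  simp only [Admissible2, Set.eq_singleton_iff_unique_mem, Set.mem_inter_iff]
  exact ⟨fun h x hx hxK => h.2 x ⟨hx, hxK⟩, fun h => ⟨⟨h0, hK⟩, fun x hx => h x hx.1 hx.2⟩⟩

lemma admissible2_congr {K : Set (Fin 2 → ℝ)} {h : Matrix (Fin 2) (Fin 2) ℝ}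
    (hgh : lattice2 g = lattice2 h) : Admissible2 K g ↔ Admissible2 K h := by
  rw [Admissible2, Admissible2, hgh]

lemma lattice2_mul_left (A g : Matrix (Fin 2) (Fin 2) ℝ) :
    lattice2 (A * g) = (A *ᵥ ·) '' lattice2 g := by
  ext x
  constructor
  · rintro ⟨m, rfl⟩
    exact ⟨_, ⟨m, rfl⟩, Matrix.mulVec_mulVec _ _ _⟩
  · rintro ⟨y, ⟨m, rfl⟩, rfl⟩
    exact ⟨m, Matrix.mulVec_mulVec _ _ _⟩

lemma intCast_mulVec (U : Matrix (Fin 2) (Fin 2) ℤ) (m : Fin 2 → ℤ) :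
    U.map ((↑) : ℤ → ℝ) *ᵥ (fun i => (m i : ℝ)) = fun i => ((U *ᵥ m) i : ℝ) :=
  funext fun i => ((Int.castRingHom ℝ).map_mulVec U m i).symm

lemma lattice2_mul_intCast_subset (g : Matrix (Fin 2) (Fin 2) ℝ) (U : Matrix (Fin 2) (Fin 2) ℤ) :
    lattice2 (g * U.map ((↑) : ℤ → ℝ)) ⊆ lattice2 g := by
  rintro _ ⟨m, rfl⟩
  exact ⟨U *ᵥ m, by rw [← Matrix.mulVec_mulVec, intCast_mulVec]⟩

lemma lattice2_mul_intCast (g : Matrix (Fin 2) (Fin 2) ℝ) {U : Matrix (Fin 2) (Fin 2) ℤ}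
    (hU : IsUnit U.det) : lattice2 (g * U.map ((↑) : ℤ → ℝ)) = lattice2 g := by
  refine (lattice2_mul_intCast_subset g U).antisymm ?_
  have hUU : U.map ((↑) : ℤ → ℝ) * U⁻¹.map ((↑) : ℤ → ℝ) = 1 := by
    have := congrArg (Matrix.map · (Int.castRingHom ℝ)) (U.mul_nonsing_inv hU)
    rw [Matrix.map_mul] at this
    simpa using this
  calc lattice2 g = lattice2 (g * U.map ((↑) : ℤ → ℝ) * U⁻¹.map ((↑) : ℤ → ℝ)) := by
        rw [Matrix.mul_assoc, hUU, Matrix.mul_one]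
    _ ⊆ _ := lattice2_mul_intCast_subset _ _

lemma Admissible2.mul_left {K : Set (Fin 2 → ℝ)} {A : Matrix (Fin 2) (Fin 2) ℝ}
    (h : Admissible2 K g) (hA : ∀ x, A *ᵥ x ∈ K → x ∈ K) : Admissible2 K (A * g) := by
  have hK : (0 : Fin 2 → ℝ) ∈ K := (h.symm.subset rfl).2
  rw [admissible2_iff hK] at h ⊢
  rw [lattice2_mul_left]
  rintro _ ⟨y, hy, rfl⟩ hyK
  show A *ᵥ y = 0
  rw [h y hy (hA y hyK), Matrix.mulVec_zero]

def swapMatrix : Matrix (Fin 2) (Fin 2) ℝ := !![0, 1; 1, 0]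

lemma swapMatrix_mul_swapMatrix : swapMatrix * swapMatrix = 1 := by
  simp [swapMatrix, Matrix.one_fin_two]

lemma swapMatrix_mulVec (x : Fin 2 → ℝ) : swapMatrix *ᵥ x = ![x 1, x 0] := by
  ext i
  fin_cases i <;> simp [swapMatrix, Matrix.mulVec, dotProduct]

lemma lattice2_mul_swapMatrix (g : Matrix (Fin 2) (Fin 2) ℝ) :
    lattice2 (g * swapMatrix) = lattice2 g := by
  have : swapMatrix = (!![0, 1; 1, 0] : Matrix (Fin 2) (Fin 2) ℤ).map (↑) := by
    ext i j
    fin_cases i <;> fin_cases j <;> simp [swapMatrix]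
  rw [this, lattice2_mul_intCast _ (by simp)]

lemma Admissible2.swapMatrix_mul (h : Admissible2 openSquare g) :
    Admissible2 openSquare (swapMatrix * g) :=
  h.mul_left fun x hx => by
    rw [swapMatrix_mulVec] at hx
    simpa [openSquare, and_comm] using hx

lemma swapMatrix_mul_shear_mul_swapMatrix (t : ℝ) :
    swapMatrix * !![1, t; 0, 1] * swapMatrix = !![1, 0; t, 1] := by
  simp [swapMatrix]

lemma IsShearedIntegerLattice.of_swapMatrix_mul
    (h : IsShearedIntegerLattice (lattice2 (swapMatrix * g))) :
    IsShearedIntegerLattice (lattice2 g) := by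
  obtain ⟨t, ht | ht⟩ := h
  all_goals
    refine ⟨t, ?_⟩
    rw [← Matrix.one_mul g, ← swapMatrix_mul_swapMatrix, Matrix.mul_assoc, lattice2_mul_left, ht,
      ← lattice2_mul_left, ← lattice2_mul_swapMatrix (swapMatrix * _)]
  · exact Or.inr (by rw [swapMatrix_mul_shear_mul_swapMatrix])
  · exact Or.inl (by
      rw [← swapMatrix_mul_shear_mul_swapMatrix, ← Matrix.mul_assoc, ← Matrix.mul_assoc,
        swapMatrix_mul_swapMatrix, Matrix.one_mul, Matrix.mul_assoc, swapMatrix_mul_swapMatrix,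
        Matrix.mul_one])

def colBasis (hg : g.det ≠ 0) : Module.Basis (Fin 2) ℝ (Fin 2 → ℝ) :=
  (Pi.basisFun ℝ (Fin 2)).map (g.toLinearEquiv' (g.invertibleOfIsUnitDet hg.isUnit))

lemma colBasis_apply (hg : g.det ≠ 0) (i j : Fin 2) : colBasis hg i j = g j i := by
  simp [colBasis, Matrix.toLinearEquiv', Matrix.mulVec_single]

lemma coe_span_colBasis (hg : g.det ≠ 0) :
    (Submodule.span ℤ (Set.range (colBasis hg)) : Set (Fin 2 → ℝ)) = lattice2 g := by
  have hsum (c : Fin 2 → ℤ) : ∑ i, c i • colBasis hg i = g *ᵥ fun i => (c i : ℝ) := by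
    ext j
    simp [colBasis_apply, Matrix.mulVec, dotProduct, Fin.sum_univ_two, mul_comm]
  ext x
  simp only [SetLike.mem_coe, Submodule.mem_span_range_iff_exists_fun, hsum]
  exact ⟨fun ⟨c, h⟩ => ⟨c, h.symm⟩, fun ⟨c, h⟩ => ⟨c, h.symm⟩⟩

lemma volume_fundamentalDomain_colBasis (hg : g.det ≠ 0) :
    volume (ZSpan.fundamentalDomain (colBasis hg)) = ENNReal.ofReal |g.det| := by
  rw [ZSpan.volume_fundamentalDomain, ← g.det_transpose]
  congr 3
  ext i j
  simp [colBasis_apply]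

theorem exists_ne_zero_mem_lattice2_of_lt (hg : g.det ≠ 0) {K : Set (Fin 2 → ℝ)}
    (h_symm : ∀ x ∈ K, -x ∈ K) (h_conv : Convex ℝ K)
    (h : ENNReal.ofReal |g.det| * 4 < volume K) : ∃ x ∈ lattice2 g, x ≠ 0 ∧ x ∈ K := by
  have : Countable (Submodule.span ℤ (Set.range (colBasis hg))).toAddSubgroup :=
    inferInstanceAs (Countable (Submodule.span ℤ (Set.range (colBasis hg))))
  obtain ⟨⟨x, hx⟩, hx0, hxK⟩ := exists_ne_zero_mem_lattice_of_measure_mul_two_pow_lt_measure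
    (ZSpan.isAddFundamentalDomain' (colBasis hg) volume) h_symm h_conv
    (by rw [volume_fundamentalDomain_colBasis, Module.finrank_fin_fun]; norm_num [h])
  exact ⟨x, coe_span_colBasis hg ▸ hx, fun h => hx0 (Subtype.ext h), hxK⟩

theorem exists_ne_zero_mem_lattice2_of_le (hg : g.det ≠ 0) {K : Set (Fin 2 → ℝ)}
    (h_symm : ∀ x ∈ K, -x ∈ K) (h_conv : Convex ℝ K) (h_cpt : IsCompact K)
    (h : ENNReal.ofReal |g.det| * 4 ≤ volume K) : ∃ x ∈ lattice2 g, x ≠ 0 ∧ x ∈ K := by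
  have : Countable (Submodule.span ℤ (Set.range (colBasis hg))).toAddSubgroup :=
    inferInstanceAs (Countable (Submodule.span ℤ (Set.range (colBasis hg))))
  obtain ⟨⟨x, hx⟩, hx0, hxK⟩ := exists_ne_zero_mem_lattice_of_measure_mul_two_pow_le_measure
    (ZSpan.isAddFundamentalDomain' (colBasis hg) volume) h_symm h_conv h_cpt
    (by rw [volume_fundamentalDomain_colBasis, Module.finrank_fin_fun]; norm_num [h])
  exact ⟨x, coe_span_colBasis hg ▸ hx, fun h => hx0 (Subtype.ext h), hxK⟩

theorem one_le_abs_det_of_admissible2 (hg : g.det ≠ 0) (hadm : Admissible2 openSquare g) :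
    1 ≤ |g.det| := by
  by_contra! hlt
  obtain ⟨x, hx, hx0, hxS⟩ := exists_ne_zero_mem_lattice2_of_lt hg (fun _ => neg_mem_openSquare)
    convex_openSquare (by
      simpa [volume_openSquare] using
        ENNReal.mul_lt_mul_left (a := 4) (by norm_num) (by norm_num) (ENNReal.ofReal_lt_one.2 hlt))
  exact hx0 ((admissible2_iff zero_mem_openSquare).1 hadm x hx hxS)

theorem exists_ne_zero_mem_lattice2_closedSquare (hg : g.det ≠ 0) (hdet : |g.det| ≤ 1) :
    ∃ x ∈ lattice2 g, x ≠ 0 ∧ x ∈ closedSquare :=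
  exists_ne_zero_mem_lattice2_of_le hg (fun _ => neg_mem_closedSquare) convex_closedSquare
    isCompact_closedSquare (by
      rw [volume_closedSquare]; exact mul_le_of_le_one_left bot_le (ENNReal.ofReal_le_one.2 hdet))

theorem admissible2_shear (t : ℝ) : Admissible2 openSquare !![1, t; 0, 1] := by
  rw [admissible2_iff zero_mem_openSquare]
  rintro _ ⟨m, rfl⟩ ⟨h0, h1⟩
  simp only [Matrix.mulVec, dotProduct, Fin.sum_univ_two, Matrix.of_apply, Matrix.cons_val',
    Matrix.cons_val_zero, Matrix.cons_val_one, Matrix.empty_val', Matrix.cons_val_fin_one,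
    one_mul, zero_mul, zero_add] at h0 h1
  have hm1 : m 1 = 0 := Int.abs_lt_one_iff.1 (by exact_mod_cast h1)
  rw [hm1, Int.cast_zero, mul_zero, add_zero] at h0
  have hm0 : m 0 = 0 := Int.abs_lt_one_iff.1 (by exact_mod_cast h0)
  ext i
  fin_cases i <;> simp [Matrix.mulVec, dotProduct, hm0, hm1]

theorem admissible2_of_isShearedIntegerLattice (h : IsShearedIntegerLattice (lattice2 g)) :
    Admissible2 openSquare g := by
  obtain ⟨t, ht | ht⟩ := h
  · exact (admissible2_congr ht).2 (admissible2_shear t)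
  · rw [admissible2_congr ht, ← swapMatrix_mul_shear_mul_swapMatrix,
      admissible2_congr (lattice2_mul_swapMatrix _)]
    exact (admissible2_shear t).swapMatrix_mul

theorem critDet2_openSquare : critDet2 openSquare = 1 := by
  refine IsLeast.csInf_eq ⟨⟨1, by simp, ?_, by simp⟩, ?_⟩
  · simpa [Matrix.one_fin_two] using admissible2_shear 0
  · rintro _ ⟨g, hg, hadm, rfl⟩
    exact one_le_abs_det_of_admissible2 hg hadm

lemma exists_int_abs_sub_lt_one_and_mul_sub_nonpos (β γ : ℝ) :
    ∃ n : ℤ, |γ - n| < 1 ∧ β * (γ - n) ≤ 0 := by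
  rcases le_or_gt β 0 with hβ | hβ
  · refine ⟨⌊γ⌋, ?_, mul_nonpos_of_nonpos_of_nonneg hβ (Int.self_sub_floor γ ▸ Int.fract_nonneg γ)⟩
    rw [Int.self_sub_floor, abs_of_nonneg (Int.fract_nonneg γ)]
    exact Int.fract_lt_one γ
  · have h₁ := Int.le_ceil γ
    have h₂ := Int.ceil_lt_add_one γ
    exact ⟨⌈γ⌉, abs_lt.2 ⟨by linarith, by linarith⟩, by nlinarith⟩

theorem isShearedIntegerLattice_of_admissible2_normal_form {β γ : ℝ} (hβ : |β| ≤ 1)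
    (hadm : Admissible2 openSquare !![1, γ; β, 1 + β * γ]) :
    IsShearedIntegerLattice (lattice2 !![1, γ; β, 1 + β * γ]) := by
  obtain ⟨n, hn, hβn⟩ := exists_int_abs_sub_lt_one_and_mul_sub_nonpos β γ
  have hβs : β * (γ - n) = 0 := by
    by_contra hne
    have hlt : |β * (γ - n)| < 1 := by
      rw [abs_mul]
      exact (mul_le_of_le_one_left (abs_nonneg _) hβ).trans_lt hn
    have hv : !![1, γ; β, 1 + β * γ] *ᵥ ![((-n : ℤ) : ℝ), ((1 : ℤ) : ℝ)] =
        ![γ - n, 1 + β * (γ - n)] := by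
      ext i
      fin_cases i <;> simp [Matrix.mulVec, dotProduct] <;> ring
    have hz := (admissible2_iff zero_mem_openSquare).1 hadm _ (mulVec_vec2_mem_lattice2 _ (-n) 1)
      (by
        rw [hv]
        refine ⟨by simpa using hn, abs_lt.2 ⟨?_, ?_⟩⟩ <;>
          simp only [Matrix.cons_val_one, Matrix.cons_val_zero] <;>
          linarith [(abs_lt.1 hlt).1, lt_of_le_of_ne hβn hne])
    apply hne
    have := congrFun (hv.symm.trans hz) 0
    simp only [Matrix.cons_val_zero, Pi.zero_apply] at this
    rw [this, mul_zero]
  rcases mul_eq_zero.1 hβs with rfl | hγ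
  · exact ⟨γ, Or.inl (by simp)⟩
  · refine ⟨β, Or.inr ?_⟩
    rw [sub_eq_zero.1 hγ]
    have hg : !![1, (n : ℝ); β, 1 + β * n] =
        !![1, 0; β, 1] * (!![1, n; 0, 1] : Matrix (Fin 2) (Fin 2) ℤ).map (↑) := by
      ext i j
      fin_cases i <;> fin_cases j <;> simp [Matrix.mul_apply, add_comm]
    rw [hg, lattice2_mul_intCast _ (by simp)]

lemma exists_units_int_eq_of_abs_eq_one {x : ℝ} (hx : |x| = 1) : ∃ u : ℤˣ, x = ((u : ℤ) : ℝ) := by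
  rcases abs_eq zero_le_one |>.1 hx with rfl | rfl
  exacts [⟨1, by simp⟩, ⟨-1, by simp⟩]

/-- Normalise `g` by the column signs `diag(u, u v)`, where `u = g₀₀` and `v = det g`. -/
theorem isShearedIntegerLattice_of_abs_apply_zero_zero_eq_one (hadm : Admissible2 openSquare g)
    (hdet : |g.det| = 1) (h00 : |g 0 0| = 1) (h10 : |g 1 0| ≤ 1) :
    IsShearedIntegerLattice (lattice2 g) := by
  obtain ⟨u, hu⟩ := exists_units_int_eq_of_abs_eq_one h00
  obtain ⟨v, hv⟩ := exists_units_int_eq_of_abs_eq_one hdet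
  have huu : ((u : ℤ) : ℝ) * u = 1 := by rcases Int.units_eq_one_or u with rfl | rfl <;> norm_num
  have hvv : ((v : ℤ) : ℝ) * v = 1 := by rcases Int.units_eq_one_or v with rfl | rfl <;> norm_num
  set U : Matrix (Fin 2) (Fin 2) ℤ := !![(u : ℤ), 0; 0, u * v]
  have hU : IsUnit U.det := by simp [U, Matrix.det_fin_two]
  have hgU : g * U.map (↑) =
      !![1, u * v * g 0 1; u * g 1 0, 1 + u * g 1 0 * (u * v * g 0 1)] := by
    rw [Matrix.det_fin_two, hu] at hv
    ext i j
    fin_cases i <;> fin_cases j <;> simp [U, Matrix.mul_apply, hu]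
    · exact huu
    · ring
    · ring
    · linear_combination (v : ℝ) * hv + hvv - (v : ℝ) * g 1 0 * g 0 1 * huu
  rw [← lattice2_mul_intCast g hU, hgU]
  refine isShearedIntegerLattice_of_admissible2_normal_form ?_ ?_
  · rwa [abs_mul, ← hu, h00, one_mul]
  · rwa [← hgU, admissible2_congr (lattice2_mul_intCast g hU)]

/-- Complete the primitive vector `(a, b)` to a basis `(a, b), (-d, c)` of `ℤ²`, where
`c a + d b = 1`. -/
theorem isShearedIntegerLattice_of_isCoprime_of_abs_fst_eq_one (hadm : Admissible2 openSquare g)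
    (hdet : |g.det| = 1) {a b : ℤ} (hab : IsCoprime a b) (h0 : |(g *ᵥ ![(a : ℝ), b]) 0| = 1)
    (h1 : |(g *ᵥ ![(a : ℝ), b]) 1| ≤ 1) : IsShearedIntegerLattice (lattice2 g) := by
  obtain ⟨c, d, hcd⟩ := hab
  set U : Matrix (Fin 2) (Fin 2) ℤ := !![a, -d; b, c]
  have hU : U.det = 1 := by
    rw [Matrix.det_fin_two_of]
    linear_combination hcd
  have hL := lattice2_mul_intCast g (U := U) (by simp [hU])
  have hcol (i : Fin 2) : (g * U.map ((↑) : ℤ → ℝ)) i 0 = (g *ᵥ ![(a : ℝ), b]) i := by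
    simp [U, Matrix.mul_apply, Matrix.mulVec, dotProduct]
  rw [← hL]
  refine isShearedIntegerLattice_of_abs_apply_zero_zero_eq_one ((admissible2_congr hL).2 hadm)
    ?_ (by rwa [hcol]) (by rwa [hcol])
  rw [Matrix.det_mul, ← Int.cast_det, hU, Int.cast_one, mul_one, hdet]

theorem isShearedIntegerLattice_of_isCoprime_of_abs_snd_eq_one (hadm : Admissible2 openSquare g)
    (hdet : |g.det| = 1) {a b : ℤ} (hab : IsCoprime a b) (h1 : |(g *ᵥ ![(a : ℝ), b]) 1| = 1)
    (h0 : |(g *ᵥ ![(a : ℝ), b]) 0| ≤ 1) : IsShearedIntegerLattice (lattice2 g) := by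
  refine .of_swapMatrix_mul <|
    isShearedIntegerLattice_of_isCoprime_of_abs_fst_eq_one hadm.swapMatrix_mul ?_ hab ?_ ?_
  · rw [Matrix.det_mul, abs_mul, hdet, mul_one]
    simp [swapMatrix]
  all_goals rwa [← Matrix.mulVec_mulVec, swapMatrix_mulVec]

theorem exists_isCoprime_mulVec_mem_closedSquare (hg : g.det ≠ 0) (hdet : |g.det| ≤ 1) :
    ∃ a b : ℤ, IsCoprime a b ∧ g *ᵥ ![(a : ℝ), b] ≠ 0 ∧ g *ᵥ ![(a : ℝ), b] ∈ closedSquare := by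
  obtain ⟨_, ⟨m, rfl⟩, hx0, hxK⟩ := exists_ne_zero_mem_lattice2_closedSquare hg hdet
  have hm : 0 < Int.gcd (m 0) (m 1) := by
    refine Int.gcd_pos_iff.2 (not_and_or.1 fun hm => hx0 ?_)
    rw [show (fun i => (m i : ℝ)) = 0 by ext i; fin_cases i <;> simp [hm.1, hm.2]]
    exact g.mulVec_zero
  obtain ⟨d, a, b, hd, hab, ha, hb⟩ := Int.exists_gcd_one' hm
  have hx : g *ᵥ (fun i => (m i : ℝ)) = (d : ℝ) • g *ᵥ ![(a : ℝ), b] := by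
    rw [← Matrix.mulVec_smul]
    congr 1
    ext i
    fin_cases i <;> simp [ha, hb, mul_comm]
  have hle (i : Fin 2) : |(g *ᵥ ![(a : ℝ), b]) i| ≤ |(g *ᵥ fun i => (m i : ℝ)) i| := by
    rw [hx, Pi.smul_apply, smul_eq_mul, abs_mul, Nat.abs_cast]
    exact le_mul_of_one_le_left (abs_nonneg _) (by exact_mod_cast hd)
  refine ⟨a, b, Int.isCoprime_iff_gcd_eq_one.2 hab, fun h => hx0 ?_,
    (hle 0).trans hxK.1, (hle 1).trans hxK.2⟩
  rw [hx, h, smul_zero]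

theorem isShearedIntegerLattice_of_admissible2 (hg : g.det ≠ 0) (hdet : |g.det| = 1)
    (hadm : Admissible2 openSquare g) : IsShearedIntegerLattice (lattice2 g) := by
  obtain ⟨a, b, hab, hp0, hpK⟩ := exists_isCoprime_mulVec_mem_closedSquare hg hdet.le
  have hpS : g *ᵥ ![(a : ℝ), b] ∉ openSquare := fun h =>
    hp0 ((admissible2_iff zero_mem_openSquare).1 hadm _ (mulVec_vec2_mem_lattice2 g a b) h)
  rcases hpK.1.eq_or_lt with h0 | h0
  · exact isShearedIntegerLattice_of_isCoprime_of_abs_fst_eq_one hadm hdet hab h0 hpK.2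
  · exact isShearedIntegerLattice_of_isCoprime_of_abs_snd_eq_one hadm hdet hab
      (hpK.2.eq_of_not_lt fun h1 => hpS ⟨h0, h1⟩) hpK.1

/-- For the open square `S = (-1,1)²`: `Δ(S) = 1`, and a lattice of covolume 1 is
`S`-admissible iff it is a horizontal or vertical shear of `ℤ²`. -/
theorem critical_locus_of_square :
    critDet2 openSquare = 1 ∧
    ∀ g : Matrix (Fin 2) (Fin 2) ℝ, g.det ≠ 0 → |g.det| = 1 →
      (Admissible2 openSquare g ↔
        ∃ t : ℝ, lattice2 g = lattice2 !![1, t; 0, 1] ∨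
          lattice2 g = lattice2 !![1, 0; t, 1]) :=
  ⟨critDet2_openSquare, fun _ hg hdet =>
    ⟨isShearedIntegerLattice_of_admissible2 hg hdet, admissible2_of_isShearedIntegerLattice⟩⟩
end
end

section
/- If H ⊂ K are bounded open convex symmetric domains in ℝ² and there exists a lattice Λ₀ which is H-critical and K-admissible, then Δ(H) = Δ(K) and the critical locus of K equals the set of H-critical lattices that are K-admissible: 𝓛(K) = { Λ ∈ 𝓛(H) : Λ ∩ K = {0} }. -/
open MeasureTheory

noncomputable section

/-! Every `K`-admissible lattice is `H`-admissible, so `Δ(H) ≤ Δ(K)`, while `Λ₀` is a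
`K`-admissible lattice of covolume `Δ(H)`, so `Δ(K) ≤ Δ(H)`. With equal critical determinants,
the two critical loci differ only by the admissibility condition. -/

lemma zero_mem_lattice2 (g : Matrix (Fin 2) (Fin 2) ℝ) : (0 : Fin 2 → ℝ) ∈ lattice2 g :=
  ⟨0, by simp only [Int.cast_zero, Pi.zero_apply]; exact g.mulVec_zero.symm⟩

lemma Admissible2.mono {H K : Set (Fin 2 → ℝ)} {g : Matrix (Fin 2) (Fin 2) ℝ}
    (h : Admissible2 K g) (hHK : H ⊆ K) (hH0 : (0 : Fin 2 → ℝ) ∈ H) : Admissible2 H g := by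
  refine Set.Subset.antisymm (fun x hx => ?_) ?_
  · exact h ▸ (⟨hx.1, hHK hx.2⟩ : x ∈ lattice2 g ∩ K)
  · rintro x rfl
    exact ⟨zero_mem_lattice2 g, hH0⟩

lemma critDet2_le_abs_det {K : Set (Fin 2 → ℝ)} {g : Matrix (Fin 2) (Fin 2) ℝ}
    (hg : g.det ≠ 0) (h : Admissible2 K g) : critDet2 K ≤ |g.det| :=
  csInf_le ⟨0, by rintro d ⟨g, -, -, rfl⟩; positivity⟩ ⟨g, hg, h, rfl⟩

lemma critDet2_mono {H K : Set (Fin 2 → ℝ)} (hHK : H ⊆ K) (hH0 : (0 : Fin 2 → ℝ) ∈ H)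
    (hK : ∃ g : Matrix (Fin 2) (Fin 2) ℝ, g.det ≠ 0 ∧ Admissible2 K g) :
    critDet2 H ≤ critDet2 K := by
  obtain ⟨g, hg, hgK⟩ := hK
  refine csInf_le_csInf ⟨0, ?_⟩ ⟨|g.det|, g, hg, hgK, rfl⟩ ?_
  · rintro d ⟨g, -, -, rfl⟩
    positivity
  · rintro d ⟨g, hg, hgK, rfl⟩
    exact ⟨g, hg, hgK.mono hHK hH0, rfl⟩

lemma critLocus2_eq_of_critDet2_eq {H K : Set (Fin 2 → ℝ)} (hHK : H ⊆ K)
    (hH0 : (0 : Fin 2 → ℝ) ∈ H) (hΔ : critDet2 H = critDet2 K) :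
    critLocus2 K = {L ∈ critLocus2 H | L ∩ K = {0}} := by
  ext L
  constructor
  · rintro ⟨g, hg, rfl, hgK, hgΔ⟩
    exact ⟨⟨g, hg, rfl, hgK.mono hHK hH0, hΔ ▸ hgΔ⟩, hgK⟩
  · rintro ⟨⟨g, hg, rfl, -, hgΔ⟩, hgK⟩
    exact ⟨g, hg, rfl, hgK, hΔ ▸ hgΔ⟩

theorem critical_locus_of_enlargement_general (H K : Set (Fin 2 → ℝ))
    (hH0 : (0 : Fin 2 → ℝ) ∈ H)
    (hHK : H ⊆ K)
    (hex : ∃ g₀ : Matrix (Fin 2) (Fin 2) ℝ, g₀.det ≠ 0 ∧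
      lattice2 g₀ ∈ critLocus2 H ∧ lattice2 g₀ ∩ K = {0}) :
    critDet2 H = critDet2 K ∧
      critLocus2 K = {L ∈ critLocus2 H | L ∩ K = {0}} := by
  obtain ⟨g₀, -, ⟨g, hg, hg₀g, -, hgΔ⟩, hg₀K⟩ := hex
  have hgK : Admissible2 K g := (hg₀g ▸ hg₀K : lattice2 g ∩ K = {0})
  have hΔ : critDet2 H = critDet2 K :=
    le_antisymm (critDet2_mono hHK hH0 ⟨g, hg, hgK⟩) (hgΔ ▸ critDet2_le_abs_det hg hgK)
  exact ⟨hΔ, critLocus2_eq_of_critDet2_eq hHK hH0 hΔ⟩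

/-- If `H ⊆ K` and some `H`-critical lattice is `K`-admissible, then `Δ(H) = Δ(K)` and
`𝓛(K)` consists exactly of the `K`-admissible members of `𝓛(H)`. -/
theorem critical_locus_of_enlargement (H K : Set (Fin 2 → ℝ))
    (hHopen : IsOpen H) (hHbdd : Bornology.IsBounded H) (hHconv : Convex ℝ H)
    (hHsym : ∀ x ∈ H, -x ∈ H) (hH0 : (0 : Fin 2 → ℝ) ∈ H)
    (hKopen : IsOpen K) (hKbdd : Bornology.IsBounded K) (hKconv : Convex ℝ K)
    (hKsym : ∀ x ∈ K, -x ∈ K)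
    (hHK : H ⊆ K)
    (hex : ∃ g₀ : Matrix (Fin 2) (Fin 2) ℝ, g₀.det ≠ 0 ∧
      lattice2 g₀ ∈ critLocus2 H ∧ lattice2 g₀ ∩ K = {0}) :
    critDet2 H = critDet2 K ∧
      critLocus2 K = {L ∈ critLocus2 H | L ∩ K = {0}} :=
  critical_locus_of_enlargement_general H K hH0 hHK hex
end
end

section
/- Let D be the open unit disc and let K ⊃ D be a convex symmetric domain whose boundary meets the unit circle in a closed set F ⊂ ∂D that is invariant under x ↦ -x. Then a D-critical lattice Λ is K-admissible if and only if all six points of Λ ∩ ∂D lie in F. -/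
open MeasureTheory

noncomputable section

/-!
A `D`-admissible lattice of covolume `√3/2` is hexagonal: in a Gauss-reduced basis its norm form
has `A ≤ C`, `|B| ≤ A/2`, `A C - B² = 3/4` and minimum `A ≥ 1`, which forces `A = C = 1`,
`B = -1/2`. So the lattice is `ℤp + ℤq` with `|p| = |q| = 1`, `p ⬝ q = -1/2`; its points on the
unit circle are `±p, ±q, ±(p+q)`, and any other nonzero point `x` has `|x|² ≥ 3` and inner product
`≥ 3/2` with one of those six, `w`. Such a `w` lies on a segment from `x` to a point of the open
disc, so if `x ∈ K` then `w ∈ K`, which is impossible when `w ∈ F ⊆ ∂K` and `K` is open.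
Conversely a point of the lattice on the unit circle lies in `closure D ⊆ closure K` but, when the
lattice is `K`-admissible, not in `K`.
-/

open Matrix

section BinaryQuadForm

def binaryQuadForm (a b c m n : ℝ) : ℝ := a * m ^ 2 + 2 * b * m * n + c * n ^ 2

def binaryPolarForm (a b c m n m' n' : ℝ) : ℝ := a * m * m' + b * (m * n' + n * m') + c * n * n'

lemma binaryPolarForm_self (a b c m n : ℝ) :
    binaryPolarForm a b c m n m n = binaryQuadForm a b c m n := by
  unfold binaryPolarForm binaryQuadForm; ring

lemma binaryQuadForm_mul_sub_polar_sq (a b c α β γ δ : ℝ) :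
    binaryQuadForm a b c α β * binaryQuadForm a b c γ δ - binaryPolarForm a b c α β γ δ ^ 2 =
      (a * c - b ^ 2) * (α * δ - β * γ) ^ 2 := by
  unfold binaryPolarForm binaryQuadForm; ring

lemma binaryPolarForm_add_mul (a b c α β γ δ k : ℝ) :
    binaryPolarForm a b c α β (γ + k * α) (δ + k * β) =
      binaryPolarForm a b c α β γ δ + k * binaryQuadForm a b c α β := by
  unfold binaryPolarForm binaryQuadForm; ring

variable {a b c : ℝ}

lemma sq_le_binaryQuadForm_right (m n : ℝ) :
    (a * c - b ^ 2) * n ^ 2 ≤ a * binaryQuadForm a b c m n := by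
  have : a * binaryQuadForm a b c m n = (a * m + b * n) ^ 2 + (a * c - b ^ 2) * n ^ 2 := by
    unfold binaryQuadForm; ring
  nlinarith [sq_nonneg (a * m + b * n)]

lemma sq_le_binaryQuadForm_left (m n : ℝ) :
    (a * c - b ^ 2) * m ^ 2 ≤ c * binaryQuadForm a b c m n := by
  have : c * binaryQuadForm a b c m n = (b * m + c * n) ^ 2 + (a * c - b ^ 2) * m ^ 2 := by
    unfold binaryQuadForm; ring
  nlinarith [sq_nonneg (b * m + c * n)]

lemma binaryQuadForm_pos (ha : 0 < a) (hd : 0 < a * c - b ^ 2) {m n : ℝ} (h : m ≠ 0 ∨ n ≠ 0) :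
    0 < binaryQuadForm a b c m n := by
  by_contra! hQ
  have hc : 0 < c := by nlinarith [sq_nonneg b]
  have hn := sq_le_binaryQuadForm_right (a := a) (b := b) (c := c) m n
  have hm := sq_le_binaryQuadForm_left (a := a) (b := b) (c := c) m n
  rcases h with h | h <;> nlinarith [sq_pos_of_ne_zero h, mul_nonpos_of_nonneg_of_nonpos ha.le hQ,
    mul_nonpos_of_nonneg_of_nonpos hc.le hQ]

lemma abs_le_ceil_of_sq_le {n : ℤ} {B : ℝ} (h : (n : ℝ) ^ 2 ≤ B) : |n| ≤ ⌈B⌉ := by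
  rw [← Int.natCast_natAbs]
  have : ((n ^ 2 : ℤ) : ℝ) ≤ ⌈B⌉ := by push_cast; exact h.trans (Int.le_ceil B)
  exact (Int.natAbs_le_self_sq n).trans (by exact_mod_cast this)

lemma finite_setOf_binaryQuadForm_le (ha : 0 < a) (hd : 0 < a * c - b ^ 2) (R : ℝ) :
    {p : ℤ × ℤ | binaryQuadForm a b c p.1 p.2 ≤ R}.Finite := by
  have hc : 0 < c := by nlinarith [sq_nonneg b]
  set N := ⌈(a + c) * |R| / (a * c - b ^ 2)⌉
  have hbound : ∀ {k : ℤ} {e : ℝ}, 0 ≤ e → e ≤ a + c → (a * c - b ^ 2) * k ^ 2 ≤ e * R →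
      -N ≤ k ∧ k ≤ N := by
    intro k e he he' hk
    refine abs_le.mp (abs_le_ceil_of_sq_le ?_)
    rw [le_div_iff₀ hd]
    nlinarith [mul_le_mul_of_nonneg_left (le_abs_self R) he,
      mul_le_mul_of_nonneg_right he' (abs_nonneg R)]
  refine ((Set.finite_Icc (-N) N).prod (Set.finite_Icc (-N) N)).subset ?_
  rintro ⟨m, n⟩ (hp : binaryQuadForm a b c m n ≤ R)
  exact ⟨hbound hc.le (by linarith) (le_trans (sq_le_binaryQuadForm_left _ _) (by gcongr)),
    hbound ha.le (by linarith) (le_trans (sq_le_binaryQuadForm_right _ _) (by gcongr))⟩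

lemma exists_isMinOn_binaryQuadForm (ha : 0 < a) (hd : 0 < a * c - b ^ 2) :
    ∃ p : ℤ × ℤ, p ≠ 0 ∧
      IsMinOn (fun p : ℤ × ℤ => binaryQuadForm a b c p.1 p.2) {p | p ≠ 0} p := by
  set f := fun p : ℤ × ℤ => binaryQuadForm a b c p.1 p.2
  have hfin : ({p | p ≠ 0} ∩ {p | f p ≤ a}).Finite :=
    (finite_setOf_binaryQuadForm_le ha hd a).subset Set.inter_subset_right
  have h10 : ((1, 0) : ℤ × ℤ) ∈ {p | p ≠ 0} ∩ {p | f p ≤ a} :=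
    ⟨by simp, by simp [f, binaryQuadForm]⟩
  obtain ⟨p, ⟨hp0, hpa⟩, hmin⟩ := Set.exists_min_image _ f hfin ⟨_, h10⟩
  refine ⟨p, hp0, isMinOn_iff.mpr fun x hx => ?_⟩
  by_cases hxa : f x ≤ a
  · exact hmin x ⟨hx, hxa⟩
  · exact hpa.trans (not_le.mp hxa).le

lemma isCoprime_of_isMinOn_binaryQuadForm {p : ℤ × ℤ} (hp : p ≠ 0)
    (hpos : 0 < binaryQuadForm a b c p.1 p.2)
    (hmin : IsMinOn (fun p : ℤ × ℤ => binaryQuadForm a b c p.1 p.2) {p | p ≠ 0} p) :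
    IsCoprime p.1 p.2 := by
  obtain ⟨m, n⟩ := p
  have hgcd : 0 < m.gcd n := by
    rw [Ne, Prod.mk_eq_zero, not_and_or] at hp
    exact Int.gcd_pos_iff.mpr hp
  obtain ⟨d, m', n', hd, hcop, rfl, rfl⟩ := Int.exists_gcd_one' hgcd
  suffices d = 1 by simpa [this, Int.isCoprime_iff_gcd_eq_one] using hcop
  have hp' : ((m', n') : ℤ × ℤ) ≠ 0 := by rintro ⟨⟩; simp at hp
  have hscale : binaryQuadForm a b c ↑(m' * d) ↑(n' * d) =
      (d : ℝ) ^ 2 * binaryQuadForm a b c m' n' := by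
    push_cast; unfold binaryQuadForm; ring
  have hle := isMinOn_iff.mp hmin _ hp'
  simp only [hscale] at hle hpos
  have hd1 : (d : ℝ) ^ 2 ≤ 1 := by
    have : 0 < binaryQuadForm a b c m' n' := pos_of_mul_pos_right hpos (by positivity)
    nlinarith
  have : d ≤ 1 := by exact_mod_cast (pow_le_one_iff_of_nonneg (by positivity) two_ne_zero).mp hd1
  omega

lemma exists_reduced_basis (ha : 0 < a) (hd : 0 < a * c - b ^ 2) :
    ∃ α β γ δ : ℤ, α * δ - β * γ = 1 ∧
      binaryQuadForm a b c α β ≤ binaryQuadForm a b c γ δ ∧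
      binaryPolarForm a b c α β γ δ ∈ Set.Ico (-binaryQuadForm a b c α β / 2)
        (binaryQuadForm a b c α β / 2) := by
  obtain ⟨⟨α, β⟩, hp0, hmin⟩ := exists_isMinOn_binaryQuadForm ha hd
  have hA : 0 < binaryQuadForm a b c α β :=
    binaryQuadForm_pos ha hd (by rw [Ne, Prod.mk_eq_zero, not_and_or] at hp0; exact_mod_cast hp0)
  obtain ⟨X, Y, hXY⟩ : IsCoprime α β := isCoprime_of_isMinOn_binaryQuadForm hp0 hA hmin
  obtain ⟨k, hk, -⟩ := existsUnique_add_zsmul_mem_Ico hA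
    (binaryPolarForm a b c α β (-Y) X) (-binaryQuadForm a b c α β / 2)
  have hdet : α * (X + k * β) - β * (-Y + k * α) = 1 := by linear_combination hXY
  have hne : ((-Y + k * α, X + k * β) : ℤ × ℤ) ≠ 0 := by
    intro h
    rw [Prod.mk_eq_zero] at h
    rw [h.1, h.2] at hdet
    simp at hdet
  have hle := isMinOn_iff.mp hmin _ hne
  dsimp only at hle
  refine ⟨α, β, -Y + k * α, X + k * β, hdet, hle, ?_⟩
  have hshear : binaryPolarForm a b c α β ↑(-Y + k * α) ↑(X + k * β) =
      binaryPolarForm a b c α β (-Y) X + k • binaryQuadForm a b c α β := by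
    push_cast
    rw [binaryPolarForm_add_mul, zsmul_eq_mul]
  rw [hshear]
  rwa [neg_div, neg_add_eq_sub, sub_half, ← neg_div] at hk

lemma exists_hexagonal_basis_of_binaryQuadForm (hd : a * c - b ^ 2 = 3 / 4)
    (hge : ∀ p : ℤ × ℤ, p ≠ 0 → 1 ≤ binaryQuadForm a b c p.1 p.2) :
    ∃ α β γ δ : ℤ, α * δ - β * γ = 1 ∧ binaryQuadForm a b c α β = 1 ∧
      binaryQuadForm a b c γ δ = 1 ∧ binaryPolarForm a b c α β γ δ = -1 / 2 := by
  have ha : 0 < a := by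
    have := hge (1, 0) (by simp)
    norm_num [binaryQuadForm] at this
    linarith
  obtain ⟨α, β, γ, δ, hdet, hAC, hBl, hBr⟩ := exists_reduced_basis ha (by rw [hd]; norm_num)
  have hA : 1 ≤ binaryQuadForm a b c α β := hge (α, β) (by
    rintro ⟨⟩
    simp at hdet)
  have hlag := binaryQuadForm_mul_sub_polar_sq a b c α β γ δ
  rw [hd, show (α * δ - β * γ : ℝ) = 1 by exact_mod_cast hdet] at hlag
  set A := binaryQuadForm a b c α β
  set B := binaryPolarForm a b c α β γ δ
  set C := binaryQuadForm a b c γ δ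
  -- Gauss reduction gives `A² ≤ A C = B² + 3/4 ≤ A²/4 + 3/4`, forcing `A = 1`.
  have hB : B ^ 2 ≤ A ^ 2 / 4 := by nlinarith
  have hA1 : A = 1 := by nlinarith
  rw [hA1] at hAC hB hBr hlag
  have hC1 : C = 1 := by nlinarith
  rw [hC1] at hlag
  refine ⟨α, β, γ, δ, hdet, hA1, hC1, ?_⟩
  have : (B + 1 / 2) * (B - 1 / 2) = 0 := by linear_combination -hlag
  rcases mul_eq_zero.mp this with h | h <;> linarith

end BinaryQuadForm

lemma span_pair_eq_of_det_eq_one {M : Type*} [AddCommGroup M] (u v : M) {α β γ δ : ℤ}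
    (h : α * δ - β * γ = 1) :
    Submodule.span ℤ {α • u + β • v, γ • u + δ • v} = Submodule.span ℤ {u, v} := by
  apply le_antisymm <;> rw [Submodule.span_le, Set.insert_subset_iff, Set.singleton_subset_iff]
  · exact ⟨Submodule.mem_span_pair.mpr ⟨α, β, rfl⟩, Submodule.mem_span_pair.mpr ⟨γ, δ, rfl⟩⟩
  · refine ⟨Submodule.mem_span_pair.mpr ⟨δ, -β, ?_⟩, Submodule.mem_span_pair.mpr ⟨-γ, α, ?_⟩⟩
    · linear_combination (norm := module) h • u
    · linear_combination (norm := module) h • v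

lemma lattice2_eq_span (g : Matrix (Fin 2) (Fin 2) ℝ) :
    lattice2 g = Submodule.span ℤ {gᵀ 0, gᵀ 1} := by
  ext x
  simp only [lattice2, Set.mem_ofPred_eq, SetLike.mem_coe, Submodule.mem_span_pair]
  constructor
  · rintro ⟨m, rfl⟩
    exact ⟨m 0, m 1, by ext i; simp [mulVec, dotProduct, Fin.sum_univ_two, mul_comm]⟩
  · rintro ⟨m, n, rfl⟩
    exact ⟨![m, n], by ext i; simp [mulVec, dotProduct, Fin.sum_univ_two, mul_comm]⟩

lemma zsmul_add_zsmul_dotProduct {ι : Type*} [Fintype ι] (u v : ι → ℝ) (m n m' n' : ℤ) :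
    (m • u + n • v) ⬝ᵥ (m' • u + n' • v) =
      binaryPolarForm (u ⬝ᵥ u) (u ⬝ᵥ v) (v ⬝ᵥ v) m n m' n' := by
  simp only [add_dotProduct, dotProduct_add, smul_dotProduct, dotProduct_smul]
  simp only [zsmul_eq_mul, dotProduct_comm v u, binaryPolarForm]
  ring

lemma transpose_dotProduct_gram_det (g : Matrix (Fin 2) (Fin 2) ℝ) :
    (gᵀ 0 ⬝ᵥ gᵀ 0) * (gᵀ 1 ⬝ᵥ gᵀ 1) - (gᵀ 0 ⬝ᵥ gᵀ 1) ^ 2 = g.det ^ 2 := by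
  simp only [det_fin_two, dotProduct, Fin.sum_univ_two, transpose_apply]
  ring

lemma mem_unitDisc_iff {x : Fin 2 → ℝ} : x ∈ unitDisc ↔ x ⬝ᵥ x < 1 := by
  simp [unitDisc, dotProduct, Fin.sum_univ_two, sq]

lemma exists_hexagonal_basis {g : Matrix (Fin 2) (Fin 2) ℝ} (hadm : Admissible2 unitDisc g)
    (hcov : |g.det| = Real.sqrt 3 / 2) :
    ∃ p q : Fin 2 → ℝ, lattice2 g = Submodule.span ℤ {p, q} ∧
      p ⬝ᵥ p = 1 ∧ q ⬝ᵥ q = 1 ∧ p ⬝ᵥ q = -1 / 2 := by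
  set u := gᵀ 0
  set v := gᵀ 1
  have hd : (u ⬝ᵥ u) * (v ⬝ᵥ v) - (u ⬝ᵥ v) ^ 2 = 3 / 4 := by
    rw [transpose_dotProduct_gram_det, ← sq_abs, hcov, div_pow, Real.sq_sqrt (by norm_num)]
    norm_num
  have hge : ∀ p : ℤ × ℤ, p ≠ 0 →
      1 ≤ binaryQuadForm (u ⬝ᵥ u) (u ⬝ᵥ v) (v ⬝ᵥ v) p.1 p.2 := by
    rintro ⟨m, n⟩ hp
    have hQ := zsmul_add_zsmul_dotProduct u v m n m n
    rw [binaryPolarForm_self] at hQ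
    by_contra! hlt
    have hx : m • u + n • v ∈ lattice2 g ∩ unitDisc :=
      ⟨lattice2_eq_span g ▸ Submodule.mem_span_pair.mpr ⟨m, n, rfl⟩,
        mem_unitDisc_iff.mpr (hQ ▸ hlt)⟩
    rw [hadm, Set.mem_singleton_iff] at hx
    rw [hx, dotProduct_zero] at hQ
    have ha : 0 < u ⬝ᵥ u := by
      refine lt_of_le_of_ne (dotProduct_self_star_nonneg u) fun h => ?_
      rw [← h] at hd
      nlinarith [sq_nonneg (u ⬝ᵥ v)]
    exact (binaryQuadForm_pos ha (by rw [hd]; norm_num)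
      (by rw [Ne, Prod.mk_eq_zero, not_and_or] at hp; exact_mod_cast hp)).ne' hQ.symm
  obtain ⟨α, β, γ, δ, hdet, hp, hq, hpq⟩ := exists_hexagonal_basis_of_binaryQuadForm hd hge
  refine ⟨α • u + β • v, γ • u + δ • v, ?_, ?_, ?_, ?_⟩
  · rw [lattice2_eq_span, span_pair_eq_of_det_eq_one u v hdet]
  · rwa [zsmul_add_zsmul_dotProduct, binaryPolarForm_self]
  · rwa [zsmul_add_zsmul_dotProduct, binaryPolarForm_self]
  · rwa [zsmul_add_zsmul_dotProduct]

lemma three_le_abs_of_two_le (m n : ℤ) (h : 2 ≤ m ^ 2 - m * n + n ^ 2) :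
    3 ≤ |2 * m - n| ∨ 3 ≤ |2 * n - m| ∨ 3 ≤ |m + n| := by
  by_contra! hlt
  obtain ⟨h₁, h₂, h₃⟩ := hlt
  rw [abs_lt] at h₁ h₂ h₃
  have hm : -1 ≤ m ∧ m ≤ 1 := by omega
  have hn : -1 ≤ n ∧ n ≤ 1 := by omega
  obtain ⟨hm₁, hm₂⟩ := hm
  obtain ⟨hn₁, hn₂⟩ := hn
  interval_cases m <;> interval_cases n <;> simp_all

lemma exists_unit_mem_span_one_lt_dotProduct {ι : Type*} [Fintype ι] {p q x : ι → ℝ}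
    (hp : p ⬝ᵥ p = 1) (hq : q ⬝ᵥ q = 1) (hpq : p ⬝ᵥ q = -1 / 2)
    (hx : x ∈ Submodule.span ℤ {p, q}) (hx0 : x ≠ 0) (hx1 : x ⬝ᵥ x ≠ 1) :
    ∃ w ∈ Submodule.span ℤ {p, q}, w ⬝ᵥ w = 1 ∧ 1 < w ⬝ᵥ x := by
  obtain ⟨m, n, rfl⟩ := Submodule.mem_span_pair.mp hx
  have hdot : ∀ a b c d : ℤ, (a • p + b • q) ⬝ᵥ (c • p + d • q) =
      a * c - (a * d + b * c) / 2 + b * d := by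
    intro a b c d
    rw [zsmul_add_zsmul_dotProduct, hp, hq, hpq, binaryPolarForm]
    ring
  have hunit : ∀ a b : ℤ, a ^ 2 - a * b + b ^ 2 = 1 → (a • p + b • q) ⬝ᵥ (a • p + b • q) = 1 := by
    intro a b h
    rw [hdot]
    have : ((a ^ 2 - a * b + b ^ 2 : ℤ) : ℝ) = 1 := by exact_mod_cast h
    push_cast at this
    linarith
  have key : ∀ a b k : ℤ, a ^ 2 - a * b + b ^ 2 = 1 →
      (a • p + b • q) ⬝ᵥ (m • p + n • q) = k / 2 → 3 ≤ |k| →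
      ∃ w ∈ Submodule.span ℤ {p, q}, w ⬝ᵥ w = 1 ∧ 1 < w ⬝ᵥ (m • p + n • q) := by
    intro a b k hab hk h3
    have hlt : 1 < |(a • p + b • q) ⬝ᵥ (m • p + n • q)| := by
      rw [hk, abs_div, abs_two, lt_div_iff₀ two_pos, ← Int.cast_abs]
      exact_mod_cast (by omega : 1 * 2 < |k|)
    rcases lt_abs.mp hlt with h | h
    · exact ⟨_, Submodule.mem_span_pair.mpr ⟨a, b, rfl⟩, hunit a b hab, h⟩
    · refine ⟨_, Submodule.mem_span_pair.mpr ⟨-a, -b, rfl⟩,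
        hunit _ _ (by linear_combination hab), ?_⟩
      rw [hdot] at h ⊢
      push_cast
      linarith
  have hN : 2 ≤ m ^ 2 - m * n + n ^ 2 := by
    have hxx : (m • p + n • q) ⬝ᵥ (m • p + n • q) = ((m ^ 2 - m * n + n ^ 2 : ℤ) : ℝ) := by
      rw [hdot]; push_cast; ring
    have h0 : m ^ 2 - m * n + n ^ 2 ≠ 0 := by
      intro h; apply hx0; rw [← dotProduct_self_eq_zero, hxx, h, Int.cast_zero]
    have h1 : m ^ 2 - m * n + n ^ 2 ≠ 1 := by
      intro h; apply hx1; rw [hxx, h, Int.cast_one]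
    have : 0 ≤ m ^ 2 - m * n + n ^ 2 := by nlinarith [sq_nonneg (m - n), sq_nonneg m, sq_nonneg n]
    omega
  rcases three_le_abs_of_two_le m n hN with h | h | h
  · exact key 1 0 _ (by norm_num) (by rw [hdot]; push_cast; ring) h
  · exact key 0 1 _ (by norm_num) (by rw [hdot]; push_cast; ring) h
  · exact key 1 1 _ (by norm_num) (by rw [hdot]; push_cast; ring) h

lemma frontier_unitDisc : frontier unitDisc = {x | x ⬝ᵥ x = 1} := by
  let e := (EuclideanSpace.equiv (Fin 2) ℝ).toHomeomorph.symm
  have hD : unitDisc = e ⁻¹' Metric.ball 0 1 := by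
    ext x
    simp [e, unitDisc, EuclideanSpace.ball_zero_eq, Fin.sum_univ_two]
  rw [hD, ← e.preimage_frontier, frontier_ball 0 one_ne_zero,
    EuclideanSpace.sphere_zero_eq 1 zero_le_one]
  ext x
  simp [e, dotProduct, Fin.sum_univ_two, sq]

lemma mem_of_one_lt_dotProduct {K : Set (Fin 2 → ℝ)} (hconv : Convex ℝ K) (hDK : unitDisc ⊆ K)
    {x w : Fin 2 → ℝ} (hx : x ∈ K) (hw : w ⬝ᵥ w ≤ 1) (hwx : 1 < w ⬝ᵥ x) : w ∈ K := by
  set s := w ⬝ᵥ x - 1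
  set N := x ⬝ᵥ x
  have hN : 0 ≤ N := dotProduct_self_star_nonneg x
  set t := s / (s + N + 1)
  have ht : 0 < t := by positivity
  have ht1 : t < 1 := (div_lt_one (by positivity)).mpr (by linarith)
  -- any `t ∈ (0, 1)` with `t (|x|² - 1) < 2 (w ⬝ x - 1)` puts `z` in the disc
  set z := (1 - t)⁻¹ • (w - t • x)
  have hwz : w = t • x + (1 - t) • z := by
    simp only [z, smul_smul, mul_inv_cancel₀ (sub_ne_zero.mpr ht1.ne'), one_smul]
    abel
  have hz : z ∈ unitDisc := by
    have htN : t * (N + 1) < s := by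
      rw [div_mul_eq_mul_div, div_lt_iff₀ (by positivity)]; nlinarith
    have hzz : z ⬝ᵥ z = (w ⬝ᵥ w - 2 * t * (w ⬝ᵥ x) + t ^ 2 * N) / (1 - t) ^ 2 := by
      simp only [z, smul_dotProduct, dotProduct_smul, sub_dotProduct, dotProduct_sub, smul_eq_mul,
        dotProduct_comm x w]
      field_simp
      ring
    rw [mem_unitDisc_iff, hzz, div_lt_one (by nlinarith)]
    nlinarith
  rw [hwz]
  exact hconv hx (hDK hz) ht.le (by linarith) (by ring)

theorem admissible_iff_boundary_points_in_F_general (K F : Set (Fin 2 → ℝ))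
    (hopen : IsOpen K) (hconv : Convex ℝ K) (hDK : unitDisc ⊆ K)
    (hF : F = frontier K ∩ frontier unitDisc)
    (g : Matrix (Fin 2) (Fin 2) ℝ)
    (hadm : Admissible2 unitDisc g) (hcov : |g.det| = Real.sqrt 3 / 2) :
    Admissible2 K g ↔ lattice2 g ∩ frontier unitDisc ⊆ F := by
  subst hF
  rw [hopen.frontier_eq, frontier_unitDisc]
  constructor
  · rintro hK x ⟨hxL, hx1⟩
    refine ⟨⟨closure_mono hDK ?_, fun hxK => ?_⟩, hx1⟩
    · exact frontier_subset_closure (frontier_unitDisc ▸ hx1)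
    · have hx0 : x = 0 := (hK ▸ ⟨hxL, hxK⟩ : x ∈ ({0} : Set _))
      simp [hx0] at hx1
  · intro hsub
    obtain ⟨p, q, hL, hp, hq, hpq⟩ := exists_hexagonal_basis hadm hcov
    rw [hL] at hsub
    have hunit : ∀ w ∈ Submodule.span ℤ {p, q}, w ⬝ᵥ w = 1 → w ∉ K :=
      fun w hw hw1 => (hsub ⟨hw, hw1⟩).1.2
    rw [Admissible2, hL]
    refine Set.eq_singleton_iff_unique_mem.mpr ⟨⟨zero_mem _, hDK (by simp [unitDisc])⟩, ?_⟩
    rintro x ⟨hxL, hxK⟩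
    by_contra hx0
    by_cases hx1 : x ⬝ᵥ x = 1
    · exact hunit x hxL hx1 hxK
    obtain ⟨w, hwL, hw1, hwx⟩ := exists_unit_mem_span_one_lt_dotProduct hp hq hpq hxL hx0 hx1
    exact hunit w hwL hw1 (mem_of_one_lt_dotProduct hconv hDK hxK hw1.le hwx)

/-- Let `K ⊇ D` meet the unit circle in the closed symmetric set `F`. A `D`-critical
lattice is `K`-admissible iff all its points on the unit circle lie in `F`. -/
theorem admissible_iff_boundary_points_in_F (K F : Set (Fin 2 → ℝ))
    (hopen : IsOpen K) (hbdd : Bornology.IsBounded K) (hconv : Convex ℝ K)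
    (hsym : ∀ x ∈ K, -x ∈ K) (hDK : unitDisc ⊆ K)
    (hF : F = frontier K ∩ frontier unitDisc)
    (hFclosed : IsClosed F) (hFsym : ∀ x ∈ F, -x ∈ F)
    (g : Matrix (Fin 2) (Fin 2) ℝ) (hdet : g.det ≠ 0)
    (hadm : Admissible2 unitDisc g) (hcov : |g.det| = Real.sqrt 3 / 2) :
    Admissible2 K g ↔ lattice2 g ∩ frontier unitDisc ⊆ F :=
  admissible_iff_boundary_points_in_F_general K F hopen hconv hDK hF g hadm hcov
end
end

section
/- Let H be a regular hexagon centered at the origin (open), and let p, q be the midpoints of two adjacent sides. Then the lattice ℤp + ℤq is H-admissible, and its covolume equals V(H)/4, so Δ(H) ≤ V(H)/4; combined with Minkowski's theorem, Δ(H) = V(H)/4. -/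
open MeasureTheory

noncomputable section

/-!
The closed hexagon is the intersection of the three strips `|nᵢ ⬝ᵥ x| ≤ √3 r / 2`, `nᵢ` the unit
normals of its sides, and it is the union of the three rhombi spanned by alternate vertices, which
overlap only along lines; so its area is `3 · (√3 r² / 2)`. With `p = (3r/4, √3r/4)` and
`q = (0, √3r/2)`, the three forms take the values `√3 r / 4 · (m + 2n, 2m + n, m - n)` at `mp + nq`,
and these integers all lie in `(-2, 2)` only for `m = n = 0`: the lattice `ℤp + ℤq` is admissible,
with covolume `3√3 r² / 8`, a quarter of the area. Minkowski's convex body theorem bounds the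
covolume of every admissible lattice below by the same quarter, so `Δ(H)` is attained at `ℤp + ℤq`.
-/

open Set Real
open scoped Matrix Pointwise

lemma mulVec_cols_intCast (p q : Fin 2 → ℝ) (m : Fin 2 → ℤ) :
    !![p 0, q 0; p 1, q 1] *ᵥ (fun i => (m i : ℝ)) = m 0 • p + m 1 • q := by
  ext i
  fin_cases i <;> simp [Matrix.mulVec, dotProduct] <;> ring

lemma det_cols (p q : Fin 2 → ℝ) : (!![p 0, q 0; p 1, q 1]).det = p 0 * q 1 - p 1 * q 0 := by
  rw [Matrix.det_fin_two_of]; ring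

lemma admissible2_cols {K : Set (Fin 2 → ℝ)} {p q : Fin 2 → ℝ} (hK : (0 : Fin 2 → ℝ) ∈ K)
    (hpq : ∀ m n : ℤ, m • p + n • q ∈ K → m • p + n • q = 0) :
    Admissible2 K !![p 0, q 0; p 1, q 1] := by
  refine subset_antisymm ?_ (singleton_subset_iff.2 ⟨⟨0, by rw [mulVec_cols_intCast]; simp⟩, hK⟩)
  rintro _ ⟨⟨m, rfl⟩, hmK⟩
  rw [mulVec_cols_intCast] at hmK ⊢
  exact hpq _ _ hmK

lemma coe_span_col_eq_lattice2 (g : Matrix (Fin 2) (Fin 2) ℝ) :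
    (Submodule.span ℤ (range g.col) : Set (Fin 2 → ℝ)) = lattice2 g := by
  ext x
  rw [SetLike.mem_coe, Submodule.mem_span_range_iff_exists_fun]
  refine exists_congr fun m => ?_
  rw [eq_comm]
  refine Eq.congr_right (funext fun i => ?_)
  simp [Matrix.mulVec, dotProduct, mul_comm]

theorem volume_le_four_mul_abs_det_of_admissible2 {K : Set (Fin 2 → ℝ)}
    (hsymm : ∀ x ∈ K, -x ∈ K) (hconv : Convex ℝ K) {g : Matrix (Fin 2) (Fin 2) ℝ}
    (hg : g.det ≠ 0) (hadm : Admissible2 K g) :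
    volume K ≤ ENNReal.ofReal (4 * |g.det|) := by
  have := g.invertibleOfIsUnitDet (isUnit_iff_ne_zero.2 hg)
  set b := (Pi.basisFun ℝ (Fin 2)).map (g.toLinearEquiv' ‹_›)
  have hb : ⇑b = g.col := funext fun i => by
    simp only [b, Module.Basis.map_apply, Pi.basisFun_apply]
    exact (Matrix.toLin'_apply g _).trans (g.mulVec_single_one i)
  have : Countable (Submodule.span ℤ (range b)).toAddSubgroup :=
    inferInstanceAs (Countable (Submodule.span ℤ (range b)))
  by_contra! hlt
  obtain ⟨x, hx0, hxK⟩ := exists_ne_zero_mem_lattice_of_measure_mul_two_pow_lt_measure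
    (ZSpan.isAddFundamentalDomain' b volume) hsymm hconv (by
      rw [ZSpan.volume_fundamentalDomain, hb]
      change ENNReal.ofReal |gᵀ.det| * _ < _
      rw [Matrix.det_transpose, Module.finrank_fin_fun, ← ENNReal.ofReal_ofNat,
        ← ENNReal.ofReal_pow zero_le_two, ← ENNReal.ofReal_mul (abs_nonneg _)]
      convert hlt using 2; ring)
  have hx : (x : Fin 2 → ℝ) ∈ lattice2 g ∩ K :=
    ⟨by rw [← coe_span_col_eq_lattice2, ← hb]; exact x.2, hxK⟩
  rw [hadm] at hx
  exact hx0 (by simpa using hx)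

theorem critDet2_eq_abs_det {K : Set (Fin 2 → ℝ)}
    (hsymm : ∀ x ∈ K, -x ∈ K) (hconv : Convex ℝ K) {g₀ : Matrix (Fin 2) (Fin 2) ℝ}
    (hg₀ : g₀.det ≠ 0) (hadm : Admissible2 K g₀) (hvol : (volume K).toReal = 4 * |g₀.det|) :
    critDet2 K = |g₀.det| := by
  refine IsLeast.csInf_eq ⟨⟨g₀, hg₀, hadm, rfl⟩, ?_⟩
  rintro _ ⟨g, hg, hgadm, rfl⟩
  have := ENNReal.toReal_le_of_le_ofReal (by positivity)
    (volume_le_four_mul_abs_det_of_admissible2 hsymm hconv hg hgadm)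
  linarith

section ConvexGeometry

variable {E : Type*} [NormedAddCommGroup E] [NormedSpace ℝ E]

lemma parallelepiped_pair_subset {C : Set E} (hC : Convex ℝ C) {u v : E} (h0 : 0 ∈ C)
    (hu : u ∈ C) (hv : v ∈ C) (huv : u + v ∈ C) : parallelepiped ![u, v] ⊆ C := by
  rw [parallelepiped_eq_convexHull]
  refine convexHull_min ?_ hC
  rw [Fin.sum_univ_two]
  rintro _ ⟨a, ha, b, hb, rfl⟩
  rcases ha with rfl | rfl <;> rcases hb with rfl | rfl <;> simpa

lemma smul_add_smul_mem_parallelepiped {a b : ℝ} (ha : a ∈ Icc 0 1) (hb : b ∈ Icc 0 1)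
    (u v : E) : a • u + b • v ∈ parallelepiped ![u, v] := by
  rw [mem_parallelepiped_iff]
  refine ⟨![a, b], ⟨?_, ?_⟩, by simp [Fin.sum_univ_two]⟩ <;> intro i <;> fin_cases i <;>
    simp [ha.1, ha.2, hb.1, hb.2]

lemma parallelepiped_subset_setOf_nonneg {ι : Type*} [Fintype ι] {v : ι → E} {f : E →ₗ[ℝ] ℝ}
    (h : ∀ i, 0 ≤ f (v i)) : parallelepiped v ⊆ {x | 0 ≤ f x} := by
  rintro _ ⟨t, ht, rfl⟩
  simp only [mem_ofPred_eq, map_sum, map_smul, smul_eq_mul]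
  exact Finset.sum_nonneg fun i _ => mul_nonneg (ht.1 i) (h i)

lemma convex_setOf_forall_abs_le {ι : Type*} (f : ι → E →ₗ[ℝ] ℝ) (c : ℝ) :
    Convex ℝ {x | ∀ i, |f i x| ≤ c} := by
  simp_rw [ofPred_forall, abs_le]
  exact convex_iInter fun i => (convex_Icc (-c) c).linear_preimage (f i)

variable [FiniteDimensional ℝ E]

lemma interior_setOf_abs_le {f : Module.Dual ℝ E} (hf : f ≠ 0) (c : ℝ) :
    interior {x | |f x| ≤ c} = {x | |f x| < c} := by
  simp_rw [abs_le, abs_lt]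
  change interior (f ⁻¹' Icc (-c) c) = f ⁻¹' Ioo (-c) c
  have hopen := f.isOpenMap_of_finiteDimensional (LinearMap.surjective hf)
  rw [← hopen.preimage_interior_eq_interior_preimage f.continuous_of_finiteDimensional,
    interior_Icc]

lemma interior_setOf_forall_abs_le {ι : Type*} [Finite ι] {f : ι → Module.Dual ℝ E}
    (hf : ∀ i, f i ≠ 0) (c : ℝ) :
    interior {x | ∀ i, |f i x| ≤ c} = {x | ∀ i, |f i x| < c} := by
  simp only [ofPred_forall, interior_iInter_of_finite, interior_setOf_abs_le (hf _)]

variable [MeasurableSpace E] [BorelSpace E] (μ : Measure E) [μ.IsAddHaarMeasure]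

lemma aedisjoint_parallelepiped {ι : Type*} [Fintype ι] {f : Module.Dual ℝ E} (hf : f ≠ 0)
    {u v : ι → E} (hu : ∀ i, 0 ≤ f (u i)) (hv : ∀ i, f (v i) ≤ 0) :
    AEDisjoint μ (parallelepiped u) (parallelepiped v) := by
  have hv' := parallelepiped_subset_setOf_nonneg (f := -f) (v := v) (by simpa using hv)
  refine measure_mono_null (fun x hx => ?_)
    (Measure.addHaar_submodule μ (LinearMap.ker f) (mt LinearMap.ker_eq_top.1 hf))
  exact le_antisymm (by simpa using hv' hx.2) (parallelepiped_subset_setOf_nonneg hu hx.1)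

end ConvexGeometry

lemma Real.volume_parallelepiped {ι : Type*} [Fintype ι] [DecidableEq ι] (v : ι → ι → ℝ) :
    volume (parallelepiped v) = ENNReal.ofReal |(Matrix.of v).det| := by
  rw [← addHaarMeasure_eq_volume_pi, ← Module.Basis.parallelepiped_basisFun,
    ← Module.Basis.addHaar_def, Measure.addHaar_parallelepiped, Module.Basis.det_apply,
    ← Matrix.det_transpose]
  rfl

lemma volume_parallelepiped_pair (u v : Fin 2 → ℝ) :
    volume (parallelepiped ![u, v]) = ENNReal.ofReal |u 0 * v 1 - u 1 * v 0| := by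
  rw [Real.volume_parallelepiped, Matrix.det_fin_two]
  simp

def hexNormal : Fin 3 → Fin 2 → ℝ := ![![0, 1], ![√3 / 2, 1 / 2], ![√3 / 2, -(1 / 2)]]

def hexVertex (r : ℝ) : Fin 6 → Fin 2 → ℝ :=
  ![![r, 0], ![r / 2, √3 * r / 2], ![-(r / 2), √3 * r / 2], ![-r, 0],
    ![-(r / 2), -(√3 * r / 2)], ![r / 2, -(√3 * r / 2)]]

lemma hexVertex_eq_cos_sin (r : ℝ) (k : Fin 6) :
    ![r * cos ((k : ℕ) * π / 3), r * sin ((k : ℕ) * π / 3)] = hexVertex r k := by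
  have h2 : 2 * π / 3 = π - π / 3 := by ring
  have h4 : 4 * π / 3 = π / 3 + π := by ring
  have h5 : 5 * π / 3 = -(π / 3) + 2 * π := by ring
  fin_cases k <;> ext i <;> fin_cases i <;>
    simp [hexVertex, h2, h4, h5, cos_pi_div_three, sin_pi_div_three] <;> ring

lemma hexNormal_ne_zero (i : Fin 3) : hexNormal i ≠ 0 := fun h => by
  have := congrFun h 1
  fin_cases i <;> simp [hexNormal] at this

lemma hexNormal_dotProduct_hexVertex (r : ℝ) (i : Fin 3) (k : Fin 6) :
    hexNormal i ⬝ᵥ hexVertex r k =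
      √3 * r / 2 *
        ((![![0, 1, 1, 0, -1, -1], ![1, 1, 0, -1, -1, 0], ![1, 0, -1, -1, 0, 1]] :
          Fin 3 → Fin 6 → ℤ) i k : ℝ) := by
  fin_cases i <;> fin_cases k <;> simp [hexNormal, hexVertex, dotProduct] <;> ring

lemma forall_hexNormal_dotProduct_iff {P : ℝ → Prop} {x : Fin 2 → ℝ} :
    (∀ i, P (hexNormal i ⬝ᵥ x)) ↔
      P (x 1) ∧ P ((√3 * x 0 + x 1) / 2) ∧ P ((√3 * x 0 - x 1) / 2) := by
  have e : ∀ i, hexNormal i ⬝ᵥ x = ![x 1, (√3 * x 0 + x 1) / 2, (√3 * x 0 - x 1) / 2] i := by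
    intro i; fin_cases i <;> simp [hexNormal, dotProduct] <;> ring
  simp [e, Fin.forall_fin_succ]

def closedHexagon (r : ℝ) : Set (Fin 2 → ℝ) := {x | ∀ i, |hexNormal i ⬝ᵥ x| ≤ √3 * r / 2}

def openHexagon (r : ℝ) : Set (Fin 2 → ℝ) := {x | ∀ i, |hexNormal i ⬝ᵥ x| < √3 * r / 2}

lemma mem_closedHexagon_iff {r : ℝ} {x : Fin 2 → ℝ} :
    x ∈ closedHexagon r ↔ |x 1| ≤ √3 * r / 2 ∧ |(√3 * x 0 + x 1) / 2| ≤ √3 * r / 2 ∧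
      |(√3 * x 0 - x 1) / 2| ≤ √3 * r / 2 :=
  forall_hexNormal_dotProduct_iff (P := fun t => |t| ≤ √3 * r / 2)

lemma mem_openHexagon_iff {r : ℝ} {x : Fin 2 → ℝ} :
    x ∈ openHexagon r ↔ |x 1| < √3 * r / 2 ∧ |(√3 * x 0 + x 1) / 2| < √3 * r / 2 ∧
      |(√3 * x 0 - x 1) / 2| < √3 * r / 2 :=
  forall_hexNormal_dotProduct_iff (P := fun t => |t| < √3 * r / 2)

lemma hexForm_ne_zero (i : Fin 3) : dotProductEquiv ℝ (Fin 2) (hexNormal i) ≠ 0 :=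
  (map_ne_zero_iff _ (dotProductEquiv ℝ (Fin 2)).injective).2 (hexNormal_ne_zero i)

lemma interior_closedHexagon (r : ℝ) : interior (closedHexagon r) = openHexagon r :=
  interior_setOf_forall_abs_le hexForm_ne_zero _

lemma convex_closedHexagon (r : ℝ) : Convex ℝ (closedHexagon r) :=
  convex_setOf_forall_abs_le (fun i => dotProductEquiv ℝ (Fin 2) (hexNormal i)) _

def hexRhombi (r : ℝ) : Set (Fin 2 → ℝ) :=
  parallelepiped ![hexVertex r 0, hexVertex r 2] ∪
    parallelepiped ![hexVertex r 2, hexVertex r 4] ∪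
    parallelepiped ![hexVertex r 4, hexVertex r 0]

lemma hexVertex_mem_closedHexagon {r : ℝ} (hr : 0 ≤ r) (k : Fin 6) :
    hexVertex r k ∈ closedHexagon r := fun i => by
  rw [hexNormal_dotProduct_hexVertex, abs_mul, abs_of_nonneg (by positivity)]
  refine mul_le_of_le_one_right (by positivity) ?_
  fin_cases i <;> fin_cases k <;> simp

lemma closedHexagon_subset_hexRhombi {r : ℝ} (hr : 0 < r) :
    closedHexagon r ⊆ hexRhombi r := by
  intro x hx
  obtain ⟨h₁, h₂, h₃⟩ := mem_closedHexagon_iff.1 hx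
  set a := √3 * r / 2
  set ℓ₁ := x 1
  set ℓ₂ := (√3 * x 0 + x 1) / 2
  set ℓ₃ := (√3 * x 0 - x 1) / 2
  have ha : 0 < a := by positivity
  have hℓ : ℓ₂ = ℓ₁ + ℓ₃ := by ring
  rw [abs_le] at h₁ h₂ h₃
  -- the coordinates of `x` in a rhombus are, up to sign and the factor `a`, the two forms
  -- vanishing on its edges
  have mem : ∀ {c d : ℝ}, 0 ≤ c → c ≤ a → 0 ≤ d → d ≤ a → ∀ k l : Fin 6,
      x = (c / a) • hexVertex r k + (d / a) • hexVertex r l →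
      x ∈ parallelepiped ![hexVertex r k, hexVertex r l] := by
    intro c d hc hca hd hda k l hx
    rw [hx]
    exact smul_add_smul_mem_parallelepiped ⟨by positivity, (div_le_one ha).2 hca⟩
      ⟨by positivity, (div_le_one ha).2 hda⟩ _ _
  have h02 : 0 ≤ ℓ₁ → 0 ≤ ℓ₂ → x ∈ parallelepiped ![hexVertex r 0, hexVertex r 2] := by
    refine fun h1 h2 => mem h2 h₂.2 h1 h₁.2 0 2 ?_
    ext i; fin_cases i <;> simp [hexVertex, a, ℓ₁, ℓ₂] <;> field_simp; ring
  have h24 : ℓ₂ ≤ 0 → ℓ₃ ≤ 0 → x ∈ parallelepiped ![hexVertex r 2, hexVertex r 4] := by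
    refine fun h2 h3 => mem (neg_nonneg.2 h3) (by linarith) (neg_nonneg.2 h2) (by linarith) 2 4 ?_
    ext i; fin_cases i <;> simp [hexVertex, a, ℓ₂, ℓ₃] <;> field_simp <;> ring
  have h40 : ℓ₁ ≤ 0 → 0 ≤ ℓ₃ → x ∈ parallelepiped ![hexVertex r 4, hexVertex r 0] := by
    refine fun h1 h3 => mem (neg_nonneg.2 h1) (by linarith) h3 h₃.2 4 0 ?_
    ext i; fin_cases i <;> simp [hexVertex, a, ℓ₁, ℓ₃] <;> field_simp; ring
  rcases le_total 0 ℓ₁ with h1 | h1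
  · rcases le_total 0 ℓ₂ with h2 | h2
    · exact Or.inl (Or.inl (h02 h1 h2))
    · exact Or.inl (Or.inr (h24 h2 (by linarith)))
  · rcases le_total 0 ℓ₃ with h3 | h3
    · exact Or.inr (h40 h1 h3)
    · exact Or.inl (Or.inr (h24 (by linarith) h3))

lemma hexRhombi_subset_convexHull (r : ℝ) :
    hexRhombi r ⊆ convexHull ℝ (range (hexVertex r)) := by
  have hC := convex_convexHull ℝ (range (hexVertex r))
  have hw : ∀ k, hexVertex r k ∈ convexHull ℝ (range (hexVertex r)) :=
    fun k => subset_convexHull ℝ _ (mem_range_self k)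
  have h0 : (0 : Fin 2 → ℝ) ∈ convexHull ℝ (range (hexVertex r)) := by
    have hmid := hC.midpoint_mem (hw 0) (hw 3)
    rwa [midpoint_eq_smul_add, show hexVertex r 0 + hexVertex r 3 = 0 by
      ext i; fin_cases i <;> simp [hexVertex], smul_zero] at hmid
  obtain ⟨h02, h24, h40⟩ : hexVertex r 0 + hexVertex r 2 = hexVertex r 1 ∧
      hexVertex r 2 + hexVertex r 4 = hexVertex r 3 ∧
      hexVertex r 4 + hexVertex r 0 = hexVertex r 5 := by
    refine ⟨?_, ?_, ?_⟩ <;> ext i <;> fin_cases i <;> simp [hexVertex] <;> ring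
  refine union_subset (union_subset ?_ ?_) ?_
  · exact parallelepiped_pair_subset hC h0 (hw 0) (hw 2) (h02 ▸ hw 1)
  · exact parallelepiped_pair_subset hC h0 (hw 2) (hw 4) (h24 ▸ hw 3)
  · exact parallelepiped_pair_subset hC h0 (hw 4) (hw 0) (h40 ▸ hw 5)

lemma convexHull_hexVertex {r : ℝ} (hr : 0 < r) :
    convexHull ℝ (range (hexVertex r)) = closedHexagon r :=
  subset_antisymm
    (convexHull_min (range_subset_iff.2 (hexVertex_mem_closedHexagon hr.le))
      (convex_closedHexagon r))
    ((closedHexagon_subset_hexRhombi hr).trans (hexRhombi_subset_convexHull r))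

lemma closedHexagon_eq_hexRhombi {r : ℝ} (hr : 0 < r) :
    closedHexagon r = hexRhombi r :=
  (closedHexagon_subset_hexRhombi hr).antisymm
    ((hexRhombi_subset_convexHull r).trans (convexHull_hexVertex hr).subset)

lemma volume_closedHexagon {r : ℝ} (hr : 0 < r) :
    volume (closedHexagon r) = ENNReal.ofReal (3 * √3 * r ^ 2 / 2) := by
  have ha : 0 ≤ √3 * r / 2 := by positivity
  have hdisj : ∀ (i : Fin 3) {k l k' l' : Fin 6},
      0 ≤ hexNormal i ⬝ᵥ hexVertex r k ∧ 0 ≤ hexNormal i ⬝ᵥ hexVertex r l ∧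
        hexNormal i ⬝ᵥ hexVertex r k' ≤ 0 ∧ hexNormal i ⬝ᵥ hexVertex r l' ≤ 0 →
      AEDisjoint volume (parallelepiped ![hexVertex r k, hexVertex r l])
        (parallelepiped ![hexVertex r k', hexVertex r l']) := fun i _ _ _ _ h =>
    aedisjoint_parallelepiped volume (hexForm_ne_zero i) (Fin.forall_fin_two.2 ⟨h.1, h.2.1⟩)
      (Fin.forall_fin_two.2 h.2.2)
  have d₀₁ := hdisj 1 (k := 0) (l := 2) (k' := 2) (l' := 4)
    (by simp only [hexNormal_dotProduct_hexVertex]; simp [ha])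
  have d₀₂ := hdisj 0 (k := 0) (l := 2) (k' := 4) (l' := 0)
    (by simp only [hexNormal_dotProduct_hexVertex]; simp [ha])
  have d₂₁ := hdisj 2 (k := 4) (l := 0) (k' := 2) (l' := 4)
    (by simp only [hexNormal_dotProduct_hexVertex]; simp [ha])
  have hnull : ∀ u v : Fin 2 → ℝ, NullMeasurableSet (parallelepiped ![u, v]) volume :=
    fun u v => (convex_parallelepiped _).nullMeasurableSet _
  rw [closedHexagon_eq_hexRhombi hr, hexRhombi,
    measure_union₀ (hnull _ _) (d₀₂.union_left d₂₁.symm), measure_union₀ (hnull _ _) d₀₁, volume_parallelepiped_pair, volume_parallelepiped_pair,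
    volume_parallelepiped_pair, ← ENNReal.ofReal_add (abs_nonneg _) (abs_nonneg _),
    ← ENNReal.ofReal_add (by positivity) (abs_nonneg _)]
  congr 1
  simp only [hexVertex, Matrix.cons_val_zero, Matrix.cons_val_one, Matrix.cons_val]
  ring_nf
  rw [abs_of_nonneg (by positivity)]
  ring

lemma neg_mem_openHexagon {r : ℝ} {x : Fin 2 → ℝ} (hx : x ∈ openHexagon r) :
    -x ∈ openHexagon r := fun i => by
  simpa only [dotProduct_neg, abs_neg] using hx i

lemma zero_mem_openHexagon {r : ℝ} (hr : 0 < r) : 0 ∈ openHexagon r := fun i => by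
  simpa using by positivity

lemma convex_openHexagon (r : ℝ) : Convex ℝ (openHexagon r) :=
  interior_closedHexagon r ▸ (convex_closedHexagon r).interior

lemma volume_openHexagon {r : ℝ} (hr : 0 < r) :
    volume (openHexagon r) = ENNReal.ofReal (3 * √3 * r ^ 2 / 2) := by
  rw [← interior_closedHexagon,
    measure_interior_of_null_frontier ((convex_closedHexagon r).addHaar_frontier volume),
    volume_closedHexagon hr]

lemma half_smul_hexVertex_zero_add_one (r : ℝ) :
    (1 / 2 : ℝ) • (hexVertex r 0 + hexVertex r 1) = ![3 * r / 4, √3 * r / 4] := by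
  ext i; fin_cases i <;> simp [hexVertex] <;> ring

lemma half_smul_hexVertex_one_add_two (r : ℝ) :
    (1 / 2 : ℝ) • (hexVertex r 1 + hexVertex r 2) = ![0, √3 * r / 2] := by
  ext i; fin_cases i <;> simp [hexVertex]; ring

lemma eq_zero_of_zsmul_add_zsmul_mem_openHexagon {r : ℝ} (hr : 0 < r) {m n : ℤ}
    (h : m • ![3 * r / 4, √3 * r / 4] + n • ![0, √3 * r / 2] ∈ openHexagon r) :
    m = 0 ∧ n = 0 := by
  obtain ⟨h₁, h₂, h₃⟩ := mem_openHexagon_iff.1 h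
  have key : ∀ k : ℤ, |√3 * r / 4 * k| < √3 * r / 2 → |k| < 2 := fun k hk => by
    rw [abs_mul, abs_of_pos (by positivity)] at hk
    have : |(k : ℝ)| < 2 := by nlinarith [show 0 < √3 * r by positivity]
    exact_mod_cast this
  have k₁ := key (m + 2 * n) (by convert h₁ using 2; simp; ring)
  have k₂ := key (2 * m + n) (by convert h₂ using 2; simp; ring)
  have k₃ := key (m - n) (by convert h₃ using 2; simp; ring)
  rw [abs_lt] at k₁ k₂ k₃
  omega

/-- For the open regular hexagon `H` (vertices at angle multiples of `π/3`, circumradius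
`r`), the lattice generated by the midpoints `p, q` of two adjacent sides is
`H`-admissible, has covolume `V(H)/4`, and `Δ(H) = V(H)/4`. -/
theorem hexagon_critical_lattice (r : ℝ) (hr : 0 < r)
    (v : ℕ → Fin 2 → ℝ)
    (hv : ∀ k : ℕ, v k = ![r * Real.cos (k * Real.pi / 3), r * Real.sin (k * Real.pi / 3)])
    (H : Set (Fin 2 → ℝ))
    (hH : H = interior (convexHull ℝ (Set.range fun k : Fin 6 => v k)))
    (p q : Fin 2 → ℝ) (hp : p = (1/2 : ℝ) • (v 0 + v 1)) (hq : q = (1/2 : ℝ) • (v 1 + v 2)) :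
    (∀ m n : ℤ, m • p + n • q ∈ H → m • p + n • q = 0) ∧
      |p 0 * q 1 - p 1 * q 0| = (volume H).toReal / 4 ∧
      critDet2 H = (volume H).toReal / 4 := by
  have hvk : ∀ k : Fin 6, v k = hexVertex r k := fun k => (hv k).trans (hexVertex_eq_cos_sin r k)
  obtain rfl : H = openHexagon r := by
    rw [hH, funext hvk, convexHull_hexVertex hr, interior_closedHexagon]
  obtain ⟨h₀, h₁, h₂⟩ : v 0 = hexVertex r 0 ∧ v 1 = hexVertex r 1 ∧ v 2 = hexVertex r 2 :=
    ⟨hvk 0, hvk 1, hvk 2⟩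
  rw [h₀, h₁, half_smul_hexVertex_zero_add_one] at hp
  rw [h₁, h₂, half_smul_hexVertex_one_add_two] at hq
  have hlattice : ∀ m n : ℤ, m • p + n • q ∈ openHexagon r → m • p + n • q = 0 := by
    intro m n h
    rw [hp, hq] at h ⊢
    obtain ⟨rfl, rfl⟩ := eq_zero_of_zsmul_add_zsmul_mem_openHexagon hr h
    simp
  have hdet : |p 0 * q 1 - p 1 * q 0| = (volume (openHexagon r)).toReal / 4 := by
    rw [volume_openHexagon hr, ENNReal.toReal_ofReal (by positivity), hp, hq]
    simp only [Matrix.cons_val_zero, Matrix.cons_val_one, mul_zero, sub_zero]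
    rw [abs_of_nonneg (by positivity)]
    ring
  refine ⟨hlattice, hdet, ?_⟩
  rw [← hdet, ← det_cols]
  exact critDet2_eq_abs_det (fun _ => neg_mem_openHexagon) (convex_openHexagon r)
    (by rw [det_cols]; simp [hp, hq]; positivity)
    (admissible2_cols (zero_mem_openHexagon hr) hlattice) (by rw [det_cols, hdet]; ring)
end
end
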